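/- arXiv:2202.08829 — 5 statements merged into one kernel-verified Lean document; each statement's English description precedes it below -/
import Mathlib

section
/- For every n ≥ 1, if π is chosen uniformly at random from PF_n, then the expected number of fixed points of π equals 1; equivalently, Σ_{π ∈ PF_n} #{i ∈ [n] : π_i = i} = (n+1)^(n-1). -/
/-!
Two facts combine. First, the parking condition only sees the multiset of preferences, so `PF n`
is stable under permuting the cars; swapping cars `0` and `i` shows that `π i = i` holds for as
many parking functions as `π 0 = i`, and summing over `i` gives `∑ fp(π) = |PF n|`.

Second, Pollak's circular argument: with `n + 1` spots on a circle, exactly one of the `n + 1`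
rotations `k ↦ b k + c` of any `b : Fin n → Fin (n + 1)` is a parking function. Let `Q x` be the
surplus of cars over spots on `[0, x)`, extended to all `x : ℤ` so that `Q (x + n + 1) = Q x - 1`.
Then `b` parks iff `Q (n + 1) < Q v` for every `v` in the preceding window `[0, n + 1)`, and
rotating `b` translates `Q`. The cycle lemma (a function with `Q (x + m) = Q x - 1` has exactly
one such strict record in every window of length `m`) gives `|PF n| * (n + 1) = (n + 1) ^ n`.
-/

open Finset

def PF (n : ℕ) : Finset (Fin n → Fin n) :=
  Finset.univ.filter (fun π => ∀ i : Fin n,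
    (i : ℕ) + 1 ≤ (Finset.univ.filter (fun k => π k ≤ i)).card)

theorem sum_card_fixedPoints_eq_card {α : Type*} [Fintype α] [DecidableEq α] [Nonempty α]
    (S : Finset (α → α)) (hS : ∀ f ∈ S, ∀ σ : Equiv.Perm α, f ∘ σ ∈ S) :
    ∑ f ∈ S, #{a | f a = a} = #S := by
  obtain ⟨a₀⟩ := ‹Nonempty α›
  have hswap (a : α) : #{f ∈ S | f a = a} = #{f ∈ S | f a₀ = a} := by
    refine card_nbij' (· ∘ Equiv.swap a₀ a) (· ∘ Equiv.swap a₀ a) ?_ ?_ ?_ ?_ <;>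
      intro f hf <;> simp_all [Function.comp_def]
  calc ∑ f ∈ S, #{a | f a = a}
      = ∑ a, #{f ∈ S | f a = a} := by
        simp only [card_filter]; exact sum_comm
    _ = ∑ a, #{f ∈ S | f a₀ = a} := sum_congr rfl fun a _ => hswap a
    _ = #S := (card_eq_sum_card_fiberwise fun _ _ => mem_coe.2 (mem_univ _)).symm

theorem comp_perm_mem_PF {n : ℕ} {π : Fin n → Fin n} (hπ : π ∈ PF n) (σ : Equiv.Perm (Fin n)) :
    π ∘ σ ∈ PF n := by
  simp only [PF, mem_filter, mem_univ, true_and, Function.comp_apply] at hπ ⊢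
  intro i
  rw [card_filter, Equiv.sum_comp σ (fun k => if π k ≤ i then 1 else 0), ← card_filter]
  exact hπ i

def IsWindowRecord (m : ℤ) (Q : ℤ → ℤ) (u : ℤ) : Prop :=
  ∀ v, u - m ≤ v → v < u → Q u < Q v

namespace IsWindowRecord

variable {m : ℤ} {Q : ℤ → ℤ} {u u' : ℤ}

theorem eq_of_le_of_lt_add (hQ : ∀ x, Q (x + m) = Q x - 1) (h : IsWindowRecord m Q u)
    (h' : IsWindowRecord m Q u') (hle : u ≤ u') (hlt : u' < u + m) : u = u' := by
  by_contra hne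
  have h₁ := h' u (by omega) (by omega)
  have h₂ := h (u' - m) (by omega) (by omega)
  have h₃ := hQ (u' - m)
  rw [sub_add_cancel] at h₃
  omega

theorem eq_of_mem_window (hQ : ∀ x, Q (x + m) = Q x - 1) (h : IsWindowRecord m Q u)
    (h' : IsWindowRecord m Q u') {a : ℤ} (hu : a ≤ u ∧ u < a + m) (hu' : a ≤ u' ∧ u' < a + m) :
    u = u' := by
  rcases le_total u u' with hle | hle
  · exact h.eq_of_le_of_lt_add hQ h' hle (by omega)
  · exact (h'.eq_of_le_of_lt_add hQ h hle (by omega)).symm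

theorem comp_add_iff {Q' : ℤ → ℤ} {c C : ℤ} (hQ' : ∀ x, Q' (x + c) = Q x + C) :
    IsWindowRecord m Q' (u + c) ↔ IsWindowRecord m Q u := by
  refine ⟨fun h v hv₁ hv₂ => ?_, fun h v hv₁ hv₂ => ?_⟩
  · have := h (v + c) (by omega) (by omega)
    rw [hQ', hQ'] at this
    omega
  · have := h (v - c) (by omega) (by omega)
    have hv := hQ' (v - c)
    rw [sub_add_cancel] at hv
    rw [hQ', hv]
    omega

end IsWindowRecord

theorem exists_isWindowRecord {m : ℤ} {Q : ℤ → ℤ} (hm : 0 < m) (hQ : ∀ x, Q (x + m) = Q x - 1)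
    (a : ℤ) : ∃ u, a ≤ u ∧ u < a + m ∧ IsWindowRecord m Q u := by
  -- the first point of the window at which `Q` attains its minimum
  obtain ⟨u, hu, hmin⟩ := (Ico a (a + m)).exists_min_image (fun v => toLex (Q v, v))
    (nonempty_Ico.2 (by omega))
  rw [mem_Ico] at hu
  refine ⟨u, hu.1, hu.2, fun v hv₁ hv₂ => ?_⟩
  by_cases hva : a ≤ v
  · have := Prod.Lex.toLex_le_toLex.1 (hmin v (mem_Ico.2 ⟨hva, by omega⟩))
    omega
  · have := Prod.Lex.toLex_le_toLex.1 (hmin (v + m) (mem_Ico.2 ⟨by omega, by omega⟩))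
    have := hQ v
    omega

section CarSurplus

variable {n : ℕ}

-- For `x ≥ 0`, `(x + n - b) / (n + 1)` counts the lifts `b + j * (n + 1)` (`j : ℕ`) in `[0, x)`;
-- for `0 ≤ x ≤ n + 1` the sum is just the number of cars preferring a spot `< x`.
def carSurplus (b : Fin n → Fin (n + 1)) (x : ℤ) : ℤ :=
  ∑ k, (x + n - (b k : ℕ)) / (n + 1) - x

theorem carSurplus_add_succ (b : Fin n → Fin (n + 1)) (x : ℤ) :
    carSurplus b (x + (n + 1)) = carSurplus b x - 1 := by
  have hterm (k : Fin n) :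
      (x + (n + 1) + n - (b k : ℕ)) / (n + 1) = (x + n - (b k : ℕ)) / (n + 1) + 1 := by
    rw [← Int.add_mul_ediv_right _ 1 (by omega : (n : ℤ) + 1 ≠ 0)]
    ring_nf
  simp only [carSurplus, hterm, sum_add_distrib, sum_const, card_univ, Fintype.card_fin]
  ring

theorem carSurplus_eq_card_sub (b : Fin n → Fin (n + 1)) {x : ℤ} (h₀ : 0 ≤ x) (h₁ : x ≤ n + 1) :
    carSurplus b x = #{k | ((b k : ℕ) : ℤ) < x} - x := by
  have hterm (k : Fin n) :
      (x + n - (b k : ℕ)) / (n + 1) = if ((b k : ℕ) : ℤ) < x then 1 else 0 := by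
    have := (b k).isLt
    split_ifs with hk
    · rw [show x + n - (b k : ℕ) = x - 1 - (b k : ℕ) + 1 * (n + 1) by ring,
        Int.add_mul_ediv_right _ _ (by omega), Int.ediv_eq_zero_of_lt (by omega) (by omega)]
      rfl
    · exact Int.ediv_eq_zero_of_lt (by omega) (by omega)
  simp only [carSurplus, hterm, natCast_card_filter]

theorem carSurplus_add_const (b : Fin n → Fin (n + 1)) (c : Fin (n + 1)) (x : ℤ) :
    carSurplus (fun k => b k + c) (x + c) =
      carSurplus b x + (∑ k, (((b k + c : ℕ) / (n + 1) : ℕ) : ℤ) - c) := by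
  have hterm (k : Fin n) : (x + c + n - ((b k + c : Fin (n + 1)) : ℕ)) / (n + 1) =
      (x + n - (b k : ℕ)) / (n + 1) + (((b k + c : ℕ) / (n + 1) : ℕ) : ℤ) := by
    rw [Fin.val_add, Int.natCast_mod, Int.emod_def,
      ← Int.add_mul_ediv_left _ _ (by omega : (n : ℤ) + 1 ≠ 0)]
    push_cast
    ring_nf
  simp only [carSurplus, hterm, sum_add_distrib]
  ring

theorem isWindowRecord_carSurplus_iff (b : Fin n → Fin (n + 1)) :
    IsWindowRecord (n + 1) (carSurplus b) (n + 1) ↔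
      ∀ i : Fin n, (i : ℕ) + 1 ≤ #{k | b k ≤ i.castSucc} := by
  have htop : carSurplus b (n + 1) = -1 := by
    rw [carSurplus_eq_card_sub b (by omega) le_rfl,
      filter_true_of_mem fun k _ => by have := (b k).isLt; omega]
    simp
  have hcard (i : Fin n) : #{k | ((b k : ℕ) : ℤ) < (i : ℕ) + 1} = #{k | b k ≤ i.castSucc} := by
    congr 1
    refine filter_congr fun k _ => ?_
    rw [Fin.le_def, Fin.val_castSucc]
    omega
  constructor
  · intro h i
    have := h ((i : ℕ) + 1) (by omega) (by omega)
    rw [htop, carSurplus_eq_card_sub b (by omega) (by omega), hcard] at this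
    omega
  · intro h v hv₁ hv₂
    rw [htop, carSurplus_eq_card_sub b (by omega) (by omega)]
    by_cases hv : v = 0
    · subst hv
      omega
    · obtain ⟨i, rfl⟩ : ∃ i : Fin n, ((i : ℕ) : ℤ) + 1 = v :=
        ⟨⟨(v - 1).toNat, by omega⟩, by simp; omega⟩
      have := h i
      rw [hcard]
      omega

theorem mem_PF_iff_isWindowRecord {π : Fin n → Fin n} :
    π ∈ PF n ↔ IsWindowRecord (n + 1) (carSurplus fun k => (π k).castSucc) (n + 1) := by
  simp [PF, isWindowRecord_carSurplus_iff, Fin.castSucc_le_castSucc_iff]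

theorem exists_castSucc_eq_of_isWindowRecord {b : Fin n → Fin (n + 1)}
    (h : IsWindowRecord (n + 1) (carSurplus b) (n + 1)) :
    ∃ π : Fin n → Fin n, (fun k => (π k).castSucc) = b := by
  rw [isWindowRecord_carSurplus_iff] at h
  have hlast (k : Fin n) : b k ≠ Fin.last n := by
    have hn : 0 < n := k.pos
    have hall :
        #{k | b k ≤ (⟨n - 1, by omega⟩ : Fin n).castSucc} = #(univ : Finset (Fin n)) := by
      have : n - 1 + 1 ≤ _ := h ⟨n - 1, by omega⟩
      refine le_antisymm (card_filter_le _ _) ?_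
      simp only [card_univ, Fintype.card_fin]
      omega
    have hk := card_filter_eq_iff.1 hall k (mem_univ k)
    rw [Fin.le_def, Fin.val_castSucc] at hk
    rw [ne_eq, Fin.ext_iff, Fin.val_last]
    omega
  exact ⟨fun k => (b k).castPred (hlast k), funext fun k => Fin.castSucc_castPred _ _⟩

theorem isWindowRecord_carSurplus_castSucc_add_iff (π : Fin n → Fin n) (c : Fin (n + 1)) :
    IsWindowRecord (n + 1) (carSurplus fun k => (π k).castSucc + c) (n + 1 + (c : ℕ)) ↔
      π ∈ PF n := by
  rw [mem_PF_iff_isWindowRecord]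
  exact IsWindowRecord.comp_add_iff (carSurplus_add_const _ c)

theorem castSucc_add_injOn_PF :
    Set.InjOn (fun p : (Fin n → Fin n) × Fin (n + 1) => fun k => (p.1 k).castSucc + p.2)
      ↑(PF n ×ˢ (univ : Finset (Fin (n + 1)))) := by
  rintro ⟨π, c⟩ hπ ⟨π', c'⟩ hπ' heq
  simp only [coe_product, Set.mem_prod, mem_coe, coe_univ, Set.mem_univ, and_true] at hπ hπ' heq
  have hr := (isWindowRecord_carSurplus_castSucc_add_iff π c).2 hπ
  have hr' := (isWindowRecord_carSurplus_castSucc_add_iff π' c').2 hπ'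
  rw [heq] at hr
  obtain rfl : c = c' := by
    have := c.isLt; have := c'.isLt
    have := hr.eq_of_mem_window (carSurplus_add_succ _) hr' (a := n + 1) (by omega) (by omega)
    exact Fin.ext (by omega)
  obtain rfl : π = π' :=
    funext fun k => Fin.castSucc_injective _ (add_right_cancel (congrFun heq k))
  rfl

theorem exists_mem_PF_castSucc_add_eq (b : Fin n → Fin (n + 1)) :
    ∃ π ∈ PF n, ∃ c : Fin (n + 1), (fun k => (π k).castSucc + c) = b := by
  obtain ⟨u, hu₁, hu₂, hu⟩ := exists_isWindowRecord (by omega) (carSurplus_add_succ b) (n + 1)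
  let c : Fin (n + 1) := ⟨(u - (n + 1)).toNat, by omega⟩
  have hb : IsWindowRecord (n + 1) (carSurplus fun k => b k - c) (n + 1) := by
    rw [← IsWindowRecord.comp_add_iff (carSurplus_add_const _ c)]
    have hu' : (n + 1 : ℤ) + ((c : ℕ) : ℤ) = u := by simp only [c]; omega
    simpa [hu'] using hu
  obtain ⟨π, hπ⟩ := exists_castSucc_eq_of_isWindowRecord hb
  refine ⟨π, by simpa [mem_PF_iff_isWindowRecord, hπ] using hb, c, funext fun k => ?_⟩
  simp [congrFun hπ k]

end CarSurplus

theorem card_PF_mul_succ (n : ℕ) : #(PF n) * (n + 1) = (n + 1) ^ n := by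
  calc #(PF n) * (n + 1) = #(PF n ×ˢ (univ : Finset (Fin (n + 1)))) := by simp
    _ = #(univ : Finset (Fin n → Fin (n + 1))) :=
      card_nbij _ (fun _ _ => mem_coe.2 (mem_univ _)) castSucc_add_injOn_PF fun b _ => by
        obtain ⟨π, hπ, c, rfl⟩ := exists_mem_PF_castSucc_add_eq b
        exact ⟨(π, c), by simpa using hπ, rfl⟩
    _ = (n + 1) ^ n := by simp

theorem card_PF (n : ℕ) : #(PF n) = (n + 1) ^ (n - 1) := by
  have h := card_PF_mul_succ n
  rcases n with _ | n
  · simpa using h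
  · rw [pow_succ] at h
    exact Nat.eq_of_mul_eq_mul_right (by omega) h

/-- The total number of fixed points over all parking functions of size `n ≥ 1` equals
`(n+1)^(n-1) = |PF_n|`; equivalently, the expected number of fixed points of a uniformly
random parking function is `1`. -/
theorem sum_fixedPoints_parkingFunctions (n : ℕ) (hn : 1 ≤ n) :
    ∑ π ∈ PF n, (Finset.univ.filter (fun i : Fin n => π i = i)).card
      = (n + 1) ^ (n - 1) := by
  have : Nonempty (Fin n) := ⟨⟨0, hn⟩⟩
  rw [sum_card_fixedPoints_eq_card _ fun π hπ σ => comp_perm_mem_PF hπ σ, card_PF]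
end

section
/- For all ℓ, n ≥ 1 and all 1 ≤ i ≤ n − ℓ, the number of parking completions of the contiguous block (i+1, i+2, …, i+ℓ) in [n] is |PC_n((i+1,…,i+ℓ))| = Σ_{k=i}^{n−ℓ} ( (n−ℓ) choose k ) · (k+1)^(k−1) · ℓ · (n−k)^(n−k−ℓ−1). -/
open Finset

/-- One-way-street parking process on spots `{1,…,n}`: given already occupied spots `occ` and a
list of preferences, each car parks in the first unoccupied spot `≥` its preference; returns the
final occupied set if all cars park, `none` otherwise. -/
def park (n : ℕ) (occ : Finset ℕ) : List ℕ → Option (Finset ℕ)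
  | [] => some occ
  | p :: rest =>
    let avail := (Finset.Icc p n) \ occ
    if h : avail.Nonempty then park n (insert (avail.min' h) occ) rest
    else none

/-- The set of parking completions of the occupied spots `v = (v 0, …, v (ℓ-1)) ∈ [n]^ℓ`:
preference sequences of length `n - ℓ` (encoded 0-indexed, coordinate value `i` meaning
preference `i+1`) for which all remaining cars park. -/
def PC (n : ℕ) {ℓ : ℕ} (v : Fin ℓ → ℕ) : Finset (Fin (n - ℓ) → Fin n) :=
  Finset.univ.filter
    (fun π => (park n (Finset.univ.image v) (List.ofFn (fun i => (π i : ℕ) + 1))).isSome)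

/-!
Cars with preferences `w j + 1` all park, with the spots of `occ` already taken, iff for every `s`
at most as many cars prefer a spot `> s` as there are free spots `> s`. For the occupied block
`i + 1, …, i + ℓ` this says that `w` is a `u`-parking function for `u = blockBound ℓ i`.

Moving the block one step to the right only removes sequences. Those lost when it moves from `k`
to `k + 1` (`1 ≤ k < m = n - ℓ`) are exactly the `w` with `k` values `< k`, forming a parking
function of length `k`, no value `k`, and the other `m - k` values, lowered by `k + 1`, forming a
`u`-parking function for `u t = t + ℓ - 1`. Pollak's circular argument counts the `u`-parking
functions of length `M` for `u t = t + b` as `(b + 1) (M + b + 1)^(M - 1)`: in circular parking on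
`ℤ/(M + b + 1)` every car parks, rotating all preferences rotates the occupied set, and linear
parking succeeds iff the spot `0` stays free. Once the block reaches the end, what is left are the
parking functions of length `m`, which give the term `k = m`.
-/

theorem List.countP_ofFn {α : Type*} {M : ℕ} (v : Fin M → α) (q : α → Bool) :
    (List.ofFn v).countP q = #{j | q (v j)} := by
  rw [List.ofFn_eq_map, List.countP_map, List.countP_eq_length_filter, card_def, filter_val,
    Fin.univ_def]
  simp [Function.comp_def]

theorem card_filter_subtype {α : Type*} (A : Finset α) (P : α → Prop) [DecidablePred P] :
    #{a : A | P a} = #{x ∈ A | P x} := by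
  rw [← card_map (Function.Embedding.subtype _)]
  congr 1
  ext j
  simp [and_comm]

theorem card_eq_card_add_sum_card_sdiff {α : Type*} [DecidableEq α] {S : ℕ → Finset α}
    (hS : Antitone S) {i m : ℕ} (him : i ≤ m) :
    #(S i) = #(S m) + ∑ k ∈ Ico i m, #(S k \ S (k + 1)) := by
  induction m, him using Nat.le_induction with
  | base => simp
  | succ m him ih =>
    rw [sum_Ico_succ_top him, ih, ← card_sdiff_add_card_eq_card (hS (Nat.le_add_right m 1))]
    omega

namespace Parking

lemma forall_add_ite_le_iff {c G : ℕ → ℕ} {p f : ℕ} (hp : 1 ≤ p) (hpf : p ≤ f)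
    (hc : Antitone c) (hG : ∀ s, p ≤ s → s < f → G s = G (p - 1)) :
    (∀ s, c s + (if s < p then 1 else 0) ≤ G s + (if s < f then 1 else 0)) ↔
      ∀ s, c s ≤ G s := by
  refine ⟨fun h s => ?_, fun h s => by have := h s; split_ifs <;> omega⟩
  have hs := h s
  have hpred := h (p - 1)
  rw [if_pos (by omega), if_pos (by omega)] at hpred
  by_cases hsp : s < p
  · rw [if_pos hsp, if_pos (by omega)] at hs
    omega
  by_cases hsf : s < f
  · rw [hG s (by omega) hsf]
    have := hc (show p - 1 ≤ s by omega)
    omega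
  · rw [if_neg hsp, if_neg hsf] at hs
    omega

lemma antitone_countP_lt (L : List ℕ) : Antitone fun s => L.countP (s < ·) :=
  fun _ _ hst => List.countP_mono_left fun x _ hx => by
    simp only [decide_eq_true_eq] at hx ⊢
    omega

variable {n : ℕ}

lemma filter_Icc_sdiff_sub_one_lt (occ : Finset ℕ) {p : ℕ} (hp : 1 ≤ p) :
    {x ∈ Icc 1 n \ occ | p - 1 < x} = Icc p n \ occ := by
  ext x
  simp only [mem_filter, mem_sdiff, mem_Icc]
  constructor
  · rintro ⟨⟨⟨-, hxn⟩, hx⟩, hpx⟩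
    exact ⟨⟨by omega, hxn⟩, hx⟩
  · rintro ⟨⟨hpx, hxn⟩, hx⟩
    exact ⟨⟨⟨by omega, hxn⟩, hx⟩, by omega⟩

lemma card_filter_lt_sdiff_insert {occ : Finset ℕ} {f : ℕ} (hf : f ∈ Icc 1 n \ occ)
    (s : ℕ) :
    #{x ∈ Icc 1 n \ occ | s < x} =
      #{x ∈ Icc 1 n \ insert f occ | s < x} + if s < f then 1 else 0 := by
  rw [sdiff_insert, filter_erase]
  split_ifs with hs
  · exact (card_erase_add_one (mem_filter.2 ⟨hf, hs⟩)).symm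
  · rw [erase_eq_of_notMem (by simp [hs]), add_zero]

theorem park_isSome_iff : ∀ {L : List ℕ} {occ : Finset ℕ}, (∀ p ∈ L, 1 ≤ p) →
    ((park n occ L).isSome ↔ ∀ s, L.countP (s < ·) ≤ #{x ∈ Icc 1 n \ occ | s < x})
  | [], occ, _ => by simp [park]
  | p :: L, occ, hL => by
    have hp : 1 ≤ p := hL p List.mem_cons_self
    simp only [park, List.countP_cons, decide_eq_true_eq]
    by_cases h : (Icc p n \ occ).Nonempty
    · rw [dif_pos h, park_isSome_iff fun q hq => hL q (List.mem_cons_of_mem p hq)]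
      set f := (Icc p n \ occ).min' h
      have hf : f ∈ Icc p n \ occ := min'_mem _ h
      have hpf : p ≤ f := (mem_Icc.1 (mem_sdiff.1 hf).1).1
      have hf' : f ∈ Icc 1 n \ occ := by
        rw [← filter_Icc_sdiff_sub_one_lt occ hp] at hf
        exact (mem_filter.1 hf).1
      simp_rw [card_filter_lt_sdiff_insert hf']
      refine (forall_add_ite_le_iff hp hpf (antitone_countP_lt L) fun s hps hsf => ?_).symm
      -- no spot of `[p, f)` is free, as `f` is the first free one from `p` on
      refine congrArg card (filter_congr fun x hx => ⟨fun hsx => by omega, fun hpx => ?_⟩)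
      by_contra hxs
      rw [sdiff_insert] at hx
      have hx' : x ∈ Icc p n \ occ := by
        rw [← filter_Icc_sdiff_sub_one_lt occ hp]
        exact mem_filter.2 ⟨(mem_erase.1 hx).2, hpx⟩
      have := min'_le _ _ hx'
      omega
    · rw [dif_neg h]
      simp only [Option.isSome_none, Bool.false_eq_true, false_iff, not_forall, not_le]
      refine ⟨p - 1, ?_⟩
      rw [filter_Icc_sdiff_sub_one_lt occ hp, not_nonempty_iff_eq_empty.1 h, if_pos (by omega)]
      simp

lemma card_filter_Icc_lt (s : ℕ) : #{x ∈ Icc 1 n | s < x} = n - s := by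
  rw [show {x ∈ Icc 1 n | s < x} = Ioc s n by
      ext
      simp only [mem_filter, mem_Icc, mem_Ioc]
      omega,
    Nat.card_Ioc]

lemma card_filter_lt_add_one {M : ℕ} (w : Fin M → ℕ) (s : ℕ) :
    #{j | s < w j + 1} + #{j | w j < s} = M := by
  have := card_filter_add_card_filter_not (s := univ) (fun j => s < w j + 1)
  rw [card_univ, Fintype.card_fin] at this
  rwa [filter_congr fun j _ => show w j < s ↔ ¬s < w j + 1 by omega]

lemma park_ofFn_isSome_iff (occ : Finset ℕ) {M : ℕ} (w : Fin M → ℕ) :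
    (park n occ (List.ofFn fun j => w j + 1)).isSome ↔
      ∀ s, M ≤ #{j | w j < s} + #{x ∈ Icc 1 n \ occ | s < x} := by
  rw [park_isSome_iff (by simp [List.mem_ofFn])]
  refine forall_congr' fun s => ?_
  rw [List.countP_ofFn]
  have := card_filter_lt_add_one w s
  simp only [decide_eq_true_eq]
  omega

lemma forall_le_add_iff_forall_le {c F u : ℕ → ℕ} {M : ℕ} (hc : Monotone c)
    (hF : ∀ t ∈ Icc 1 M, t + F (u t) ≤ M) (hu : ∀ s, 0 < M - F s → u (M - F s) ≤ s) :
    (∀ s, M ≤ c s + F s) ↔ ∀ t ∈ Icc 1 M, t ≤ c (u t) := by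
  refine ⟨fun h t ht => ?_, fun h s => ?_⟩
  · have := h (u t)
    have := hF t ht
    omega
  · rcases Nat.eq_zero_or_pos (M - F s) with hs | hs
    · omega
    · have := h (M - F s) (mem_Icc.2 ⟨hs, by omega⟩)
      have := hc (hu s hs)
      omega

section uParking

variable {ι κ : Type*} [Fintype ι] [Fintype κ]

lemma monotone_card_filter_lt (w : ι → ℕ) : Monotone fun s => #{j | w j < s} :=
  fun _ _ hst => card_le_card <| monotone_filter_right _ fun _ _ hj => hj.trans_le hst

lemma card_filter_comp_equiv_lt (e : ι ≃ κ) (w : κ → ℕ) (s : ℕ) :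
    #{j | w (e j) < s} = #{k | w k < s} :=
  card_equiv e fun j => by simp

variable [DecidableEq ι] [DecidableEq κ]

/-- `u`-parking functions with values shifted to start at `0`: `t ≤ #{j | w j < u t}` says that
the `t`-th smallest value of `w` is `< u t`. The ambient bound is the case `t = card ι`. -/
def uParking (ι : Type*) [Fintype ι] [DecidableEq ι] (u : ℕ → ℕ) : Finset (ι → ℕ) :=
  {w ∈ Fintype.piFinset fun _ : ι => range (u (Fintype.card ι)) |
    ∀ t ∈ (Icc 1 (Fintype.card ι) : Finset ℕ), t ≤ #{j | w j < u t}}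

variable {u v : ℕ → ℕ} {w : ι → ℕ}

lemma lt_of_mem_uParking (hw : w ∈ uParking ι u) (j : ι) : w j < u (Fintype.card ι) := by
  rw [uParking, mem_filter, Fintype.mem_piFinset] at hw
  exact mem_range.1 (hw.1 j)

lemma mem_uParking :
    w ∈ uParking ι u ↔ ∀ t ∈ Icc 1 (Fintype.card ι), t ≤ #{j | w j < u t} := by
  rw [uParking, mem_filter, Fintype.mem_piFinset, and_iff_right_iff_imp]
  intro h j
  have hcard : 1 ≤ Fintype.card ι := Fintype.card_pos_iff.2 ⟨j⟩
  have hall := h _ (mem_Icc.2 ⟨hcard, le_rfl⟩)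
  rw [← card_univ] at hall
  exact mem_range.2 <| card_filter_eq_iff.1 ((card_le_card (filter_subset _ _)).antisymm hall)
    j (mem_univ j)

lemma uParking_mono (h : ∀ t ∈ Icc 1 (Fintype.card ι), u t ≤ v t) :
    uParking ι u ⊆ uParking ι v :=
  fun w hw => mem_uParking.2 fun t ht =>
    (mem_uParking.1 hw t ht).trans (monotone_card_filter_lt w (h t ht))

lemma uParking_congr (h : ∀ t ∈ Icc 1 (Fintype.card ι), u t = v t) :
    uParking ι u = uParking ι v :=
  (uParking_mono fun t ht => (h t ht).le).antisymm (uParking_mono fun t ht => (h t ht).ge)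

lemma comp_equiv_mem_uParking {w : κ → ℕ} (e : ι ≃ κ) (hw : w ∈ uParking κ u) :
    w ∘ e ∈ uParking ι u := by
  simpa only [mem_uParking, Function.comp_apply, card_filter_comp_equiv_lt,
    Fintype.card_congr e] using hw

lemma card_uParking_congr (e : ι ≃ κ) : #(uParking ι u) = #(uParking κ u) :=
  card_nbij' (· ∘ e.symm) (· ∘ e) (fun _ => comp_equiv_mem_uParking e.symm)
    (fun _ => comp_equiv_mem_uParking e) (fun w _ => by simp [Function.comp_def])
    (fun w _ => by simp [Function.comp_def])

lemma park_ofFn_isSome_iff_mem_uParking {occ : Finset ℕ} {F u : ℕ → ℕ} {M : ℕ}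
    (hfree : ∀ s, #{x ∈ Icc 1 n \ occ | s < x} = F s)
    (hF : ∀ t ∈ Icc 1 M, t + F (u t) ≤ M)
    (hu : ∀ s, 0 < M - F s → u (M - F s) ≤ s) (w : Fin M → ℕ) :
    (park n occ (List.ofFn fun j => w j + 1)).isSome ↔ w ∈ uParking (Fin M) u := by
  simp_rw [park_ofFn_isSome_iff, hfree, mem_uParking, Fintype.card_fin]
  exact forall_le_add_iff_forall_le (monotone_card_filter_lt w) hF hu

lemma card_filter_val_mem_uParking {N : ℕ} (hN : u (Fintype.card ι) ≤ N) :
    #{w : ι → Fin N | (fun j => (w j : ℕ)) ∈ uParking ι u} = #(uParking ι u) := by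
  refine card_nbij (fun w j => w j) (fun w hw => (mem_filter.1 hw).2)
    (fun w _ w' _ h => funext fun j => Fin.ext (congrFun h j)) fun w hw => ?_
  have hlt (j : ι) : w j < N := (lt_of_mem_uParking hw j).trans_le hN
  exact ⟨fun j => ⟨w j, hlt j⟩, mem_filter.2 ⟨mem_univ _, hw⟩, rfl⟩

end uParking

section CircularParking

variable {N : ℕ}

open Classical in
noncomputable def circSpot (p : ZMod N) (occ : Finset (ZMod N)) : ZMod N :=
  if h : ∃ k : ℕ, p + k ∉ occ then p + Nat.find h else p

noncomputable def circPark : List (ZMod N) → Finset (ZMod N) → Finset (ZMod N)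
  | [], occ => occ
  | p :: L, occ => circPark L (insert (circSpot p occ) occ)

lemma circSpot_eq {p : ZMod N} {occ : Finset (ZMod N)} {k : ℕ} (hk : p + k ∉ occ)
    (hlt : ∀ j < k, p + j ∈ occ) : circSpot p occ = p + k := by
  classical
  have h : ∃ k : ℕ, p + k ∉ occ := ⟨k, hk⟩
  rw [circSpot, dif_pos h, (Nat.find_eq_iff h).2 ⟨hk, fun j hj => not_not.2 (hlt j hj)⟩]

lemma circSpot_notMem [NeZero N] {occ : Finset (ZMod N)} (hocc : occ ≠ univ) (p : ZMod N) :
    circSpot p occ ∉ occ := by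
  classical
  obtain ⟨x, hx⟩ : ∃ x, x ∉ occ := by simpa [eq_univ_iff_forall] using hocc
  have h : ∃ k : ℕ, p + k ∉ occ := ⟨(x - p).val, by simpa using hx⟩
  rw [circSpot, dif_pos h]
  exact Nat.find_spec h

lemma circSpot_add (p c : ZMod N) (occ : Finset (ZMod N)) :
    circSpot (p + c) (occ.image (· + c)) = circSpot p occ + c := by
  classical
  have hmem (k : ℕ) : p + c + k ∈ occ.image (· + c) ↔ p + k ∈ occ := by
    simp [add_right_comm p c]
  by_cases h : ∃ k : ℕ, p + k ∉ occ
  · rw [circSpot_eq (k := Nat.find h) ((hmem _).not.2 (Nat.find_spec h))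
      fun j hj => (hmem j).2 (not_not.1 (Nat.find_min h hj)), circSpot, dif_pos h, add_right_comm]
  · have h' : ¬∃ k : ℕ, p + c + k ∉ occ.image (· + c) := by simpa only [hmem] using h
    rw [circSpot, circSpot, dif_neg h, dif_neg h']

lemma subset_circPark : ∀ (L : List (ZMod N)) (occ : Finset (ZMod N)), occ ⊆ circPark L occ
  | [], _ => subset_rfl
  | _ :: L, _ => (subset_insert _ _).trans (subset_circPark L _)

lemma card_circPark [NeZero N] : ∀ (L : List (ZMod N)) (occ : Finset (ZMod N)),
    #occ + L.length ≤ N → #(circPark L occ) = #occ + L.length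
  | [], _, _ => rfl
  | p :: L, occ, h => by
    have hocc : occ ≠ univ := by
      rintro rfl
      simp [ZMod.card] at h
    have hcard := card_insert_of_notMem (circSpot_notMem hocc p)
    rw [circPark, card_circPark L _ (by simp only [List.length_cons] at h; omega), hcard,
      List.length_cons]
    omega

lemma circPark_map_add (c : ZMod N) : ∀ (L : List (ZMod N)) (occ : Finset (ZMod N)),
    circPark (L.map (· + c)) (occ.image (· + c)) = (circPark L occ).image (· + c)
  | [], _ => rfl
  | p :: L, occ => by
    rw [List.map_cons, circPark, circPark, circSpot_add, ← circPark_map_add c L, image_insert]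

lemma natCast_injOn_Icc : Set.InjOn (Nat.cast : ℕ → ZMod N) (Set.Icc 1 N) := by
  intro x ⟨hx1, hxN⟩ y ⟨hy1, hyN⟩ h
  have h' : ((x - 1 : ℕ) : ZMod N) = ((y - 1 : ℕ) : ZMod N) := by
    rw [Nat.cast_sub hx1, Nat.cast_sub hy1, h]
  have := congrArg ZMod.val h'
  rw [ZMod.val_cast_of_lt (by omega), ZMod.val_cast_of_lt (by omega)] at this
  omega

lemma natCast_mem_image_natCast_iff {occ : Finset ℕ} (hocc : occ ⊆ Icc 1 (N - 1)) {x : ℕ}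
    (hx : x ∈ Icc 1 N) : (x : ZMod N) ∈ occ.image Nat.cast ↔ x ∈ occ := by
  refine ⟨fun h => ?_, mem_image_of_mem _⟩
  obtain ⟨y, hy, hyx⟩ := mem_image.1 h
  have hy' := mem_Icc.1 (hocc hy)
  rwa [← natCast_injOn_Icc ⟨hy'.1, by omega⟩ (by simpa using hx) hyx]

lemma circSpot_natCast {occ : Finset ℕ} (hocc : occ ⊆ Icc 1 (N - 1)) {p f : ℕ} (hp : 1 ≤ p)
    (hpf : p ≤ f) (hfN : f ≤ N) (hf : f ∉ occ)
    (hbefore : ∀ x, p ≤ x → x < f → x ∈ occ) :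
    circSpot (p : ZMod N) (occ.image Nat.cast) = f := by
  have hcast (j : ℕ) : (p : ZMod N) + j = ((p + j : ℕ) : ZMod N) := (Nat.cast_add p j).symm
  have hk : (p : ZMod N) + (f - p : ℕ) ∉ occ.image Nat.cast := by
    rwa [hcast, Nat.add_sub_cancel' hpf,
      natCast_mem_image_natCast_iff hocc (mem_Icc.2 ⟨by omega, hfN⟩)]
  have hlt (j : ℕ) (hj : j < f - p) : (p : ZMod N) + j ∈ occ.image Nat.cast := by
    rw [hcast, natCast_mem_image_natCast_iff hocc (mem_Icc.2 ⟨by omega, by omega⟩)]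
    exact hbefore _ (by omega) (by omega)
  rw [circSpot_eq hk hlt, hcast, Nat.add_sub_cancel' hpf]

/-- The spot `0 = N` of the circle takes the first car that overflows linear parking on
`[1, N - 1]`, and stays taken. -/
theorem park_isSome_iff_zero_notMem_circPark :
    ∀ {L : List ℕ} {occ : Finset ℕ}, (∀ p ∈ L, p ∈ Icc 1 N) → occ ⊆ Icc 1 (N - 1) →
      ((park (N - 1) occ L).isSome ↔
        (0 : ZMod N) ∉ circPark (L.map Nat.cast) (occ.image Nat.cast))
  | [], occ, _, hocc => by
    simp only [park, Option.isSome_some, List.map_nil, circPark, true_iff]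
    intro h
    obtain ⟨y, hy, hy0⟩ := mem_image.1 h
    have hy' := mem_Icc.1 (hocc hy)
    rw [← ZMod.natCast_self N] at hy0
    have := natCast_injOn_Icc ⟨hy'.1, by omega⟩ ⟨by omega, le_rfl⟩ hy0
    omega
  | p :: L, occ, hL, hocc => by
    obtain ⟨hp1, hpN⟩ := mem_Icc.1 (hL p List.mem_cons_self)
    have hL' : ∀ q ∈ L, q ∈ Icc 1 N := fun q hq => hL q (List.mem_cons_of_mem p hq)
    simp only [park, List.map_cons, circPark]
    by_cases h : (Icc p (N - 1) \ occ).Nonempty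
    · rw [dif_pos h]
      set f := (Icc p (N - 1) \ occ).min' h
      obtain ⟨⟨hpf, hfN⟩, hfocc⟩ : (p ≤ f ∧ f ≤ N - 1) ∧ f ∉ occ := by
        simpa only [mem_sdiff, mem_Icc] using min'_mem _ h
      have hbefore (x : ℕ) (hpx : p ≤ x) (hxf : x < f) : x ∈ occ := by
        by_contra hx
        have := min'_le (Icc p (N - 1) \ occ) x
          (mem_sdiff.2 ⟨mem_Icc.2 ⟨hpx, by omega⟩, hx⟩)
        omega
      rw [circSpot_natCast hocc hp1 hpf (by omega) hfocc hbefore, ← image_insert]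
      exact park_isSome_iff_zero_notMem_circPark hL'
        (insert_subset (mem_Icc.2 ⟨by omega, hfN⟩) hocc)
    · have hN : N ∉ occ := fun hN => by have := mem_Icc.1 (hocc hN); omega
      have hbefore (x : ℕ) (hpx : p ≤ x) (hxN : x < N) : x ∈ occ :=
        by_contra fun hx => h ⟨x, mem_sdiff.2 ⟨mem_Icc.2 ⟨hpx, by omega⟩, hx⟩⟩
      rw [dif_neg h, circSpot_natCast hocc hp1 hpN le_rfl hN hbefore, ZMod.natCast_self]
      simp only [Option.isSome_none, Bool.false_eq_true, false_iff, not_not]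
      exact subset_circPark _ _ (mem_insert_self _ _)

lemma card_filter_zero_notMem_circPark_add [NeZero N] {M : ℕ} (hM : M ≤ N)
    (v : Fin M → ZMod N) :
    #{c : ZMod N | (0 : ZMod N) ∉ circPark (List.ofFn fun j => v j + c) ∅} = N - M := by
  set X := circPark (List.ofFn v) ∅
  have hX : #X = M := by simpa using card_circPark (List.ofFn v) ∅ (by simpa using hM)
  have hshift (c : ZMod N) : circPark (List.ofFn fun j => v j + c) ∅ = X.image (· + c) := by
    rw [← circPark_map_add, List.map_ofFn, image_empty]
    rfl
  calc #{c : ZMod N | (0 : ZMod N) ∉ circPark (List.ofFn fun j => v j + c) ∅}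
      = #Xᶜ := card_equiv (Equiv.neg _) fun c => by simp [hshift]
    _ = N - M := by rw [card_compl, ZMod.card, hX]

theorem card_filter_zero_notMem_circPark_mul [NeZero N] {M : ℕ} (hM : M ≤ N) :
    #{v : Fin M → ZMod N | (0 : ZMod N) ∉ circPark (List.ofFn v) ∅} * N =
      (N - M) * N ^ M := by
  have hrot (c : ZMod N) :
      #{v : Fin M → ZMod N | (0 : ZMod N) ∉ circPark (List.ofFn fun j => v j + c) ∅} =
        #{v : Fin M → ZMod N | (0 : ZMod N) ∉ circPark (List.ofFn v) ∅} :=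
    card_equiv (Equiv.piCongrRight fun _ => Equiv.addRight c) fun _ => by
      simp only [mem_filter, mem_univ, true_and]
      rfl
  have := sum_card_bipartiteAbove_eq_sum_card_bipartiteBelow (s := univ) (t := univ)
    fun (v : Fin M → ZMod N) (c : ZMod N) =>
      (0 : ZMod N) ∉ circPark (List.ofFn fun j => v j + c) ∅
  simp only [bipartiteAbove, bipartiteBelow, card_filter_zero_notMem_circPark_add hM, hrot,
    sum_const, card_univ, Fintype.card_fun, Fintype.card_fin, ZMod.card, smul_eq_mul] at this
  rw [mul_comm, ← this, mul_comm]

end CircularParking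

theorem card_uParking_add {M : ℕ} (b : ℕ) (hM : 1 ≤ M) :
    #(uParking (Fin M) (· + b)) = (b + 1) * (M + b + 1) ^ (M - 1) := by
  set N := M + b + 1
  have hmem (w : Fin M → ℕ) (hw : ∀ j, w j < N) :
      w ∈ uParking (Fin M) (· + b) ↔
        (0 : ZMod N) ∉ circPark (List.ofFn fun j => (w j : ZMod N) + 1) ∅ := by
    have hcirc := park_isSome_iff_zero_notMem_circPark (N := N) (occ := ∅)
      (L := List.ofFn fun j => w j + 1)
      (by simpa [List.mem_ofFn] using fun j => Nat.lt_iff_add_one_le.1 (hw j)) (empty_subset _)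
    rw [show N - 1 = M + b by omega, List.map_ofFn, image_empty] at hcirc
    rw [← park_ofFn_isSome_iff_mem_uParking (F := fun s => M + b - s)
      (fun s => by rw [sdiff_empty, card_filter_Icc_lt])
      (fun t ht => by simp only [mem_Icc] at ht; omega) (fun s hs => by omega), hcirc]
    simp [Function.comp_def]
  have hcard : #{v : Fin M → ZMod N | (0 : ZMod N) ∉ circPark (List.ofFn v) ∅} =
      #(uParking (Fin M) (· + b)) := by
    refine card_nbij' (fun v j => (v j - 1).val) (fun w j => (w j : ZMod N) + 1)
      (fun v hv => ?_) (fun w hw => ?_) (fun v _ => ?_) (fun w hw => ?_)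
    · simpa [hmem _ fun j => ZMod.val_lt _] using hv
    · simpa [hmem w fun j => (lt_of_mem_uParking hw j).trans_le (by simp [N])] using hw
    · simp
    · funext j
      simp only [add_sub_cancel_right]
      exact ZMod.val_cast_of_lt ((lt_of_mem_uParking hw j).trans_le (by simp [N]))
  have := card_filter_zero_notMem_circPark_mul (N := N) (M := M) (by omega)
  rw [hcard, show N - M = b + 1 by omega, show N ^ M = N ^ (M - 1) * N by
    rw [← pow_succ, Nat.sub_add_cancel hM], ← mul_assoc] at this
  exact Nat.eq_of_mul_eq_mul_right (by omega) this

lemma card_uParking_id {M : ℕ} (hM : 1 ≤ M) :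
    #(uParking (Fin M) fun t => t) = (M + 1) ^ (M - 1) := by
  simpa using card_uParking_add (M := M) 0 hM

section Block

/-- With the spots `k + 1, …, k + ℓ` occupied, the `t`-th free spot is `blockBound ℓ k t`. -/
def blockBound (ℓ k t : ℕ) : ℕ := if t ≤ k then t else t + ℓ

variable {ι : Type*} [Fintype ι] [DecidableEq ι] {ℓ k : ℕ} {w : ι → ℕ}

lemma blockBound_succ_le (ℓ k t : ℕ) : blockBound ℓ (k + 1) t ≤ blockBound ℓ k t := by
  unfold blockBound
  split_ifs <;> omega

lemma antitone_uParking_blockBound (ι : Type*) [Fintype ι] [DecidableEq ι] (ℓ : ℕ) :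
    Antitone fun k => uParking ι (blockBound ℓ k) :=
  antitone_nat_of_succ_le fun k => uParking_mono fun t _ => blockBound_succ_le ℓ k t

lemma mem_uParking_blockBound_sdiff_iff (hk : 1 ≤ k) (hkm : k < Fintype.card ι) :
    w ∈ uParking ι (blockBound ℓ k) \ uParking ι (blockBound ℓ (k + 1)) ↔
      w ∈ uParking ι (blockBound ℓ k) ∧ #{j | w j < k + 1} ≤ k := by
  rw [mem_sdiff]
  refine and_congr_right fun hw => ⟨fun hw' => ?_, fun hcount hw' => ?_⟩
  · by_contra hcount
    refine hw' (mem_uParking.2 fun t ht => ?_)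
    by_cases htk : t = k + 1
    · subst htk
      simp only [blockBound, le_rfl, if_true]
      omega
    · have := mem_uParking.1 hw t ht
      simp only [blockBound] at this ⊢
      split_ifs at this ⊢ <;> omega
  · have := mem_uParking.1 hw' (k + 1) (mem_Icc.2 ⟨by omega, hkm⟩)
    simp only [blockBound, le_rfl, if_true] at this
    omega

lemma forall_mem_Icc_iff_and {P : ℕ → Prop} {k m : ℕ} (hkm : k ≤ m) :
    (∀ t ∈ Icc 1 m, P t) ↔
      (∀ t ∈ Icc 1 k, P t) ∧ ∀ t ∈ Icc 1 (m - k), P (k + t) := by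
  simp only [mem_Icc]
  refine ⟨fun h => ⟨fun t ht => h t (by omega), fun t ht => h _ (by omega)⟩,
    fun ⟨h₁, h₂⟩ t ht => ?_⟩
  by_cases htk : t ≤ k
  · exact h₁ t ⟨ht.1, htk⟩
  · simpa [Nat.add_sub_cancel' (le_of_not_ge htk)] using h₂ (t - k) (by omega)

lemma card_filter_eq_add_compl (A : Finset ι) (P : ι → Prop) [DecidablePred P] :
    #{j | P j} = #{a : A | P a} + #{b : (Aᶜ : Finset ι) | P b} := by
  rw [card_filter_subtype, card_filter_subtype, ← card_filter_add_card_filter_not (· ∈ A),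
    filter_filter, filter_filter]
  congr 2 <;> ext j <;> simp [and_comm]

variable {A : Finset ι}

lemma card_filter_lt_of_le_succ (hAc : ∀ j ∉ A, k < w j) {s : ℕ} (hs : s ≤ k + 1) :
    #{j | w j < s} = #{a : A | w a < s} := by
  have : #{b : (Aᶜ : Finset ι) | w b < s} = 0 :=
    card_eq_zero.2 <| filter_eq_empty_iff.2 fun b _ => by have := hAc b (mem_compl.1 b.2); omega
  rw [card_filter_eq_add_compl A, this, add_zero]

lemma card_filter_lt_of_le (hA : ∀ j ∈ A, w j < k) (hAc : ∀ j ∉ A, k < w j) {s : ℕ}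
    (hs : k ≤ s) :
    #{j | w j < s} = #A + #{b : (Aᶜ : Finset ι) | w b - (k + 1) < s - (k + 1)} := by
  have hlow : #{a : A | w a < s} = #A := by
    rw [filter_true_of_mem fun (a : A) _ => (hA a a.2).trans_le hs, card_univ, Fintype.card_coe]
  rw [card_filter_eq_add_compl A, hlow]
  exact congrArg _ (congrArg card (filter_congr fun b _ => by
    have := hAc b (mem_compl.1 b.2)
    omega))

lemma mem_uParking_blockBound_iff_of_split (hℓ : 1 ≤ ℓ) (hkm : k ≤ Fintype.card ι)
    (hcard : #A = k) (hA : ∀ j ∈ A, w j < k) (hAc : ∀ j ∉ A, k < w j) :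
    w ∈ uParking ι (blockBound ℓ k) ↔
      (fun a : A => w a) ∈ uParking A (fun t => t) ∧
        (fun b : (Aᶜ : Finset ι) => w b - (k + 1)) ∈
          uParking (Aᶜ : Finset ι) (· + (ℓ - 1)) := by
  have hcardc : Fintype.card (Aᶜ : Finset ι) = Fintype.card ι - k := by
    rw [Fintype.card_coe, card_compl, hcard]
  rw [mem_uParking, forall_mem_Icc_iff_and hkm, mem_uParking, mem_uParking, Fintype.card_coe,
    hcard, hcardc]
  refine and_congr (forall₂_congr fun t ht => ?_) (forall₂_congr fun t ht => ?_) <;>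
    rw [mem_Icc] at ht
  · rw [blockBound, if_pos ht.2, card_filter_lt_of_le_succ hAc (by omega)]
  · rw [blockBound, if_neg (by omega), card_filter_lt_of_le hA hAc (by omega), hcard,
      show k + t + ℓ - (k + 1) = t + (ℓ - 1) by omega]
    omega

lemma mem_fiber_uParking_blockBound_sdiff_iff (hk : 1 ≤ k) (hkm : k < Fintype.card ι)
    (hcard : #A = k) :
    (w ∈ uParking ι (blockBound ℓ k) \ uParking ι (blockBound ℓ (k + 1)) ∧
        ({j | w j < k} : Finset ι) = A) ↔
      (∀ j ∈ A, w j < k) ∧ (∀ j ∉ A, k < w j) ∧ w ∈ uParking ι (blockBound ℓ k) := by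
  rw [mem_uParking_blockBound_sdiff_iff hk hkm]
  constructor
  · rintro ⟨⟨hw, hcount⟩, rfl⟩
    have hsub : ({j | w j < k} : Finset ι) ⊆ ({j | w j < k + 1} : Finset ι) :=
      monotone_filter_right _ fun j _ hj => by omega
    have heq := eq_of_subset_of_card_le hsub (hcount.trans hcard.ge)
    refine ⟨fun j hj => (mem_filter.1 hj).2, fun j hj => ?_, hw⟩
    have : ¬w j < k + 1 := fun h => hj (heq ▸ mem_filter.2 ⟨mem_univ j, h⟩)
    simp only [mem_filter, mem_univ, true_and] at hj
    omega
  · rintro ⟨hA, hAc, hw⟩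
    refine ⟨⟨hw, ?_⟩, ?_⟩
    · rw [card_filter_lt_of_le_succ hAc le_rfl]
      exact (card_filter_le _ _).trans (by rw [card_univ, Fintype.card_coe, hcard])
    · ext j
      simp only [mem_filter, mem_univ, true_and]
      exact ⟨fun h => by_contra fun hj => by have := hAc j hj; omega, hA j⟩

lemma card_fiber_uParking_blockBound_sdiff (hℓ : 1 ≤ ℓ) (hk : 1 ≤ k)
    (hkm : k < Fintype.card ι) (hcard : #A = k) :
    #{w ∈ uParking ι (blockBound ℓ k) \ uParking ι (blockBound ℓ (k + 1)) |
        ({j | w j < k} : Finset ι) = A} =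
      #(uParking A (fun t => t)) * #(uParking (Aᶜ : Finset ι) (· + (ℓ - 1))) := by
  have hAc' (b : (Aᶜ : Finset ι)) : (b : ι) ∉ A := mem_compl.1 b.2
  rw [← card_product]
  refine card_nbij' (fun w => ((fun a : A => w a), fun b : (Aᶜ : Finset ι) => w b - (k + 1)))
    (fun p j => if h : j ∈ A then p.1 ⟨j, h⟩ else p.2 ⟨j, mem_compl.2 h⟩ + (k + 1))
    (fun w hw => ?_) (fun p hp => ?_) (fun w hw => ?_) (fun p _ => ?_)
  · rw [mem_coe, mem_filter, mem_fiber_uParking_blockBound_sdiff_iff hk hkm hcard] at hw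
    obtain ⟨hA, hAc, hw⟩ := hw
    exact mem_product.2 ((mem_uParking_blockBound_iff_of_split hℓ hkm.le hcard hA hAc).1 hw)
  · rw [mem_coe, mem_product] at hp
    rw [mem_coe, mem_filter, mem_fiber_uParking_blockBound_sdiff_iff hk hkm hcard]
    have hA (j : ι) (hj : j ∈ A) :
        (if h : j ∈ A then p.1 ⟨j, h⟩ else p.2 ⟨j, mem_compl.2 h⟩ + (k + 1)) < k := by
      rw [dif_pos hj]
      simpa [hcard] using lt_of_mem_uParking hp.1 ⟨j, hj⟩
    have hAc (j : ι) (hj : j ∉ A) :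
        k < (if h : j ∈ A then p.1 ⟨j, h⟩ else p.2 ⟨j, mem_compl.2 h⟩ + (k + 1)) := by
      rw [dif_neg hj]
      omega
    refine ⟨hA, hAc, (mem_uParking_blockBound_iff_of_split hℓ hkm.le hcard hA hAc).2 ?_⟩
    simpa [hAc'] using hp
  · rw [mem_coe, mem_filter, mem_fiber_uParking_blockBound_sdiff_iff hk hkm hcard] at hw
    funext j
    by_cases hj : j ∈ A
    · simp [hj]
    · have := hw.2.1 j hj
      simp only [hj, dite_false]
      omega
  · simp [hAc']

theorem card_uParking_blockBound_sdiff (hℓ : 1 ≤ ℓ) (hk : 1 ≤ k) {m : ℕ} (hkm : k < m) :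
    #(uParking (Fin m) (blockBound ℓ k) \ uParking (Fin m) (blockBound ℓ (k + 1))) =
      m.choose k * ((k + 1) ^ (k - 1) * (ℓ * (m - k + ℓ) ^ (m - k - 1))) := by
  have hkm' : k < Fintype.card (Fin m) := by simpa using hkm
  have hmaps : Set.MapsTo (fun w : Fin m → ℕ => ({j | w j < k} : Finset (Fin m)))
      ↑(uParking (Fin m) (blockBound ℓ k) \ uParking (Fin m) (blockBound ℓ (k + 1)))
      (powersetCard k (univ : Finset (Fin m)) : Set (Finset (Fin m))) := fun w hw => by
    rw [mem_coe, mem_uParking_blockBound_sdiff_iff hk hkm'] at hw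
    have hle := mem_uParking.1 hw.1 k (mem_Icc.2 ⟨hk, hkm'.le⟩)
    simp only [blockBound, le_rfl, if_true] at hle
    have := monotone_card_filter_lt w (Nat.le_add_right k 1)
    exact mem_powersetCard_univ.2 (by simp only at this ⊢; omega)
  have hfiber (A : Finset (Fin m)) (hA : A ∈ powersetCard k univ) :
      #(uParking A fun t => t) * #(uParking (Aᶜ : Finset (Fin m)) (· + (ℓ - 1))) =
        (k + 1) ^ (k - 1) * (ℓ * (m - k + ℓ) ^ (m - k - 1)) := by
    rw [mem_powersetCard_univ] at hA
    rw [card_uParking_congr (Fintype.equivFinOfCardEq (by simp [hA]) : A ≃ Fin k),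
      card_uParking_congr (Fintype.equivFinOfCardEq (by simp [hA]) :
        (Aᶜ : Finset (Fin m)) ≃ Fin (m - k)),
      card_uParking_id hk, card_uParking_add (ℓ - 1) (by omega),
      Nat.sub_add_cancel hℓ, show m - k + (ℓ - 1) + 1 = m - k + ℓ by omega]
  rw [card_eq_sum_card_fiberwise hmaps,
    sum_congr rfl fun A hA => card_fiber_uParking_blockBound_sdiff hℓ hk hkm'
      (mem_powersetCard_univ.1 hA),
    sum_congr rfl hfiber, sum_const, card_powersetCard, card_univ, Fintype.card_fin, smul_eq_mul]

theorem card_uParking_blockBound {i m : ℕ} (hℓ : 1 ≤ ℓ) (hi : 1 ≤ i) (him : i ≤ m) :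
    #(uParking (Fin m) (blockBound ℓ i)) = (m + 1) ^ (m - 1) +
      ∑ k ∈ Ico i m, m.choose k * ((k + 1) ^ (k - 1) * (ℓ * (m - k + ℓ) ^ (m - k - 1))) := by
  rw [card_eq_card_add_sum_card_sdiff (antitone_uParking_blockBound (Fin m) ℓ) him,
    uParking_congr (u := blockBound ℓ m) (v := fun t => t)
      fun t ht => if_pos (by simpa using (mem_Icc.1 ht).2),
    card_uParking_id (hi.trans him)]
  exact congrArg _ (sum_congr rfl fun k hk =>
    card_uParking_blockBound_sdiff hℓ (hi.trans (mem_Ico.1 hk).1) (mem_Ico.1 hk).2)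

lemma card_filter_Icc_sdiff_Icc_lt {n i : ℕ} (h : i + ℓ ≤ n) (s : ℕ) :
    #{x ∈ Icc 1 n \ Icc (i + 1) (i + ℓ) | s < x} = n - s - (i + ℓ - max s i) := by
  have hset :
      {x ∈ Icc 1 n \ Icc (i + 1) (i + ℓ) | s < x} = Ioc s n \ Ioc (max s i) (i + ℓ) := by
    ext x
    simp only [mem_filter, mem_sdiff, mem_Icc, mem_Ioc]
    omega
  rw [hset, card_sdiff_of_subset fun x hx => by simp only [mem_Ioc] at hx ⊢; omega,
    Nat.card_Ioc, Nat.card_Ioc]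

theorem card_PC_block_eq_card_uParking {n i : ℕ} (hin : i + ℓ ≤ n) :
    #(PC n fun j : Fin ℓ => i + 1 + (j : ℕ)) =
      #(uParking (Fin (n - ℓ)) (blockBound ℓ i)) := by
  have himage : univ.image (fun j : Fin ℓ => i + 1 + (j : ℕ)) = Icc (i + 1) (i + ℓ) := by
    ext x
    simp only [mem_image, mem_univ, true_and, mem_Icc]
    refine ⟨fun ⟨j, hj⟩ => by omega, fun hx => ⟨⟨x - (i + 1), by omega⟩, ?_⟩⟩
    simp only
    omega
  have hPC : PC n (fun j : Fin ℓ => i + 1 + (j : ℕ)) =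
      ({w | (fun j => (w j : ℕ)) ∈ uParking (Fin (n - ℓ)) (blockBound ℓ i)} :
        Finset (Fin (n - ℓ) → Fin n)) := by
    refine filter_congr fun w _ => ?_
    rw [himage]
    exact park_ofFn_isSome_iff_mem_uParking (card_filter_Icc_sdiff_Icc_lt hin)
      (fun t ht => by simp only [mem_Icc] at ht; simp only [blockBound]; split_ifs <;> omega)
      (fun s hs => by simp only [blockBound]; split_ifs <;> omega) _
  rw [hPC, card_filter_val_mem_uParking]
  simp only [Fintype.card_fin, blockBound]
  split_ifs <;> omega

end Block

end Parking

theorem card_parkingCompletions_block_general (ℓ n i : ℕ) (hℓ : 1 ≤ ℓ)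
    (hi : 1 ≤ i) (hin : i ≤ n - ℓ) :
    ((PC n (fun j : Fin ℓ => i + 1 + (j : ℕ))).card : ℝ) =
      ∑ k ∈ Finset.Icc i (n - ℓ),
        (Nat.choose (n - ℓ) k : ℝ) * ((k : ℝ) + 1) ^ (k - 1) * ℓ
          * ((n : ℝ) - k) ^ ((n : ℤ) - k - ℓ - 1) := by
  set m := n - ℓ
  have hn : m + ℓ = n := by omega
  have hlast : (m.choose m : ℝ) * ((m : ℝ) + 1) ^ (m - 1) * ℓ *
      ((n : ℝ) - m) ^ ((n : ℤ) - m - ℓ - 1) = (m + 1) ^ (m - 1) := by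
    rw [show (n : ℝ) - m = ℓ by rw [← hn]; push_cast; ring,
      show (n : ℤ) - m - ℓ - 1 = -1 by omega, Nat.choose_self, Nat.cast_one, zpow_neg_one]
    field_simp
  have hterm (k : ℕ) (hk : k ∈ Ico i m) :
      (m.choose k : ℝ) * ((k : ℝ) + 1) ^ (k - 1) * ℓ * ((n : ℝ) - k) ^ ((n : ℤ) - k - ℓ - 1) =
        ((m.choose k * ((k + 1) ^ (k - 1) * (ℓ * (m - k + ℓ) ^ (m - k - 1))) : ℕ) : ℝ) := by
    have hkm := (mem_Ico.1 hk).2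
    rw [show (n : ℤ) - k - ℓ - 1 = ((m - k - 1 : ℕ) : ℤ) by omega, zpow_natCast,
      show (n : ℝ) - k = ((m - k + ℓ : ℕ) : ℝ) by rw [← hn]; push_cast [hkm.le]; ring]
    push_cast
    ring
  rw [Parking.card_PC_block_eq_card_uParking (by omega),
    Parking.card_uParking_blockBound hℓ hi hin, ← Ico_add_one_right_eq_Icc,
    sum_Ico_succ_top (by omega), sum_congr rfl hterm, hlast]
  push_cast
  ring

/-- The number of parking completions of the contiguous block `(i+1, …, i+ℓ)` in `[n]`:
`|PC_n((i+1,…,i+ℓ))| = Σ_{k=i}^{n-ℓ} C(n-ℓ, k) (k+1)^(k-1) ℓ (n-k)^(n-k-ℓ-1)`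
(the last exponent, which can equal `-1`, is interpreted as an integer power of the
positive real `n - k`). -/
theorem card_parkingCompletions_block (ℓ n i : ℕ) (hℓ : 1 ≤ ℓ) (hn : 1 ≤ n)
    (hi : 1 ≤ i) (hin : i ≤ n - ℓ) :
    ((PC n (fun j : Fin ℓ => i + 1 + (j : ℕ))).card : ℝ) =
      ∑ k ∈ Finset.Icc i (n - ℓ),
        (Nat.choose (n - ℓ) k : ℝ) * ((k : ℝ) + 1) ^ (k - 1) * ℓ
          * ((n : ℝ) - k) ^ ((n : ℤ) - k - ℓ - 1) :=
  card_parkingCompletions_block_general ℓ n i hℓ hi hin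
end

section
/- For all m ≥ 1, n ≥ 0, and positive reals x_1,…,x_m, Abel's multinomial sum with all parameters p_i = −1 evaluates as A_n(x_1,…,x_m; −1,…,−1) = (x_1 + … + x_m)(x_1 + … + x_m + n)^(n−1) / (x_1 x_2 ⋯ x_m). -/
/-!
Put `a_n(x) = x (x + n)^(n-1)`. Since `(s + x)^(s-1) = a_s(x) / x`, the claim says that
`∑ multinomial(n; s) ∏ a_{s_j}(x_j) = a_n(x_1 + ⋯ + x_m)`, i.e. that the Abel polynomials are of
binomial type; by induction on `m` this reduces to `∑ C(n,k) a_k(x) a_{n-k}(y) = a_n(x + y)`.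

For that, let `D_n(x, y) = A_n(x, y; -1, 0)` and `B_n(x, y) = A_n(x, y; -1, -1)`. The pointwise
identity `(k + x) + (n - k + y) = x + y + n` gives `D_n(x, y) + D_n(y, x) = (x + y + n) B_n(x, y)`,
and splitting `(j + y)^j = y (j + y)^(j-1) + j (j + y)^(j-1)` gives
`D_{n+1}(x, y) = y B_{n+1}(x, y) + (n + 1) D_n(x, y + 1)`. Applied to `(x, y)` and `(y, x)`, these
three equations determine `B_{n+1}` and `D_{n+1}` from `D_n`, whence Abel's identity
`D_n(x, y) = (x + y + n)^n / x` by induction, and then `B_n(x, y) = (x + y)(x + y + n)^(n-1) / (x y)`.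
-/

open Finset

/-- Abel's multinomial sum
`A_n(x_1,…,x_m; p_1,…,p_m) = Σ_{s_1+⋯+s_m=n} multinomial(n; s) ∏_j (s_j + x_j)^(s_j + p_j)`,
the sum running over `m`-tuples of nonnegative integers summing to `n`, with integer
exponents interpreted as integer powers of positive reals. -/
noncomputable def abelSum (m n : ℕ) (x : Fin m → ℝ) (p : Fin m → ℤ) : ℝ :=
  ∑ s ∈ Finset.Nat.antidiagonalTuple m n,
    (Nat.multinomial Finset.univ s : ℝ) * ∏ j, ((s j : ℝ) + x j) ^ ((s j : ℤ) + p j)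

theorem Finset.Nat.sum_antidiagonalTuple_succ {M : Type*} [AddCommMonoid M] (m n : ℕ)
    (f : (Fin (m + 1) → ℕ) → M) :
    ∑ s ∈ antidiagonalTuple (m + 1) n, f s =
      ∑ p ∈ antidiagonal n, ∑ t ∈ antidiagonalTuple m p.2, f (Fin.cons p.1 t) := by
  rw [sum_sigma']
  refine sum_nbij' (fun s => ⟨(s 0, ∑ i, Fin.tail s i), Fin.tail s⟩)
    (fun p => Fin.cons p.1.1 p.2) ?_ ?_ ?_ ?_ ?_
  · intro s hs
    simp_all [mem_antidiagonalTuple, Fin.sum_univ_succ, Fin.tail]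
  · rintro ⟨⟨k, l⟩, t⟩ h
    simp_all [mem_antidiagonalTuple, Fin.sum_univ_succ]
  · intro s _; exact Fin.cons_self_tail s
  · rintro ⟨⟨k, l⟩, t⟩ h
    simp_all [mem_antidiagonalTuple]
  · intro s _; simp

theorem Nat.multinomial_univ_fin_cons {m : ℕ} (k : ℕ) (t : Fin m → ℕ) :
    Nat.multinomial univ (Fin.cons k t : Fin (m + 1) → ℕ) =
      (k + ∑ i, t i).choose k * Nat.multinomial univ t := by
  rw [Fin.univ_succ, Nat.multinomial_cons]
  simp [Nat.multinomial, sum_map, prod_map]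

theorem zpow_add_neg_one_mul {G : Type*} [GroupWithZero G] {a : G} (ha : a ≠ 0) (k : ℤ) :
    a ^ (k + -1) * a = a ^ (k + 0) := by
  rw [← zpow_add_one₀ ha]; ring_nf

/-- `A_n(x, y; p, q)`, the case `m = 2` of `abelSum`, indexed by the antidiagonal. -/
noncomputable def abelSum₂ (n : ℕ) (x y : ℝ) (p q : ℤ) : ℝ :=
  ∑ ij ∈ antidiagonal n,
    (n.choose ij.1 : ℝ) * ((ij.1 : ℝ) + x) ^ ((ij.1 : ℤ) + p) * ((ij.2 : ℝ) + y) ^ ((ij.2 : ℤ) + q)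

namespace abelSum₂

variable {n : ℕ} {x y : ℝ}

theorem comm (p q : ℤ) : abelSum₂ n x y p q = abelSum₂ n y x q p := by
  rw [abelSum₂, abelSum₂, ← Nat.sum_antidiagonal_swap]
  refine sum_congr rfl fun ij hij => ?_
  rw [Nat.choose_symm_of_eq_add (mem_antidiagonal.mp hij).symm]
  simp only [Prod.fst_swap, Prod.snd_swap]
  ring

theorem neg_one_zero_add_zero_neg_one (hx : 0 < x) (hy : 0 < y) :
    abelSum₂ n x y (-1) 0 + abelSum₂ n x y 0 (-1) = (x + y + n) * abelSum₂ n x y (-1) (-1) := by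
  rw [abelSum₂, abelSum₂, abelSum₂, mul_sum, ← sum_add_distrib]
  refine sum_congr rfl fun ij hij => ?_
  have hn : (n : ℝ) = ij.1 + ij.2 := by exact_mod_cast (mem_antidiagonal.mp hij).symm
  rw [← zpow_add_neg_one_mul (a := (ij.1 : ℝ) + x) (by positivity),
    ← zpow_add_neg_one_mul (a := (ij.2 : ℝ) + y) (by positivity), hn]
  ring

theorem succ_neg_one_zero (hy : 0 < y) :
    abelSum₂ (n + 1) x y (-1) 0 =
      y * abelSum₂ (n + 1) x y (-1) (-1) + (n + 1) * abelSum₂ n x (y + 1) (-1) 0 := by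
  have hsplit : abelSum₂ (n + 1) x y (-1) 0 = y * abelSum₂ (n + 1) x y (-1) (-1) +
      ∑ ij ∈ antidiagonal (n + 1), ((n + 1).choose ij.1 : ℝ) * ((ij.1 : ℝ) + x) ^ ((ij.1 : ℤ) + -1)
        * (ij.2 * ((ij.2 : ℝ) + y) ^ ((ij.2 : ℤ) + -1)) := by
    rw [abelSum₂, abelSum₂, mul_sum, ← sum_add_distrib]
    refine sum_congr rfl fun ij _ => ?_
    rw [← zpow_add_neg_one_mul (a := (ij.2 : ℝ) + y) (by positivity)]
    ring
  rw [hsplit, Nat.sum_antidiagonal_succ']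
  simp only [Nat.cast_zero, zero_mul, mul_zero, zero_add]
  congr 1
  rw [abelSum₂, mul_sum]
  refine sum_congr rfl fun ij hij => ?_
  have hchoose : ((n + 1).choose ij.1 : ℝ) * (ij.2 + 1) = (n + 1) * n.choose ij.1 := by
    have h := Nat.choose_mul_succ_eq n ij.1
    rw [show n + 1 - ij.1 = ij.2 + 1 by have := mem_antidiagonal.mp hij; omega] at h
    norm_cast
    linarith
  push_cast
  rw [show ((ij.2 : ℤ) + 1 + -1) = (ij.2 : ℤ) + 0 by ring,
    show (ij.2 : ℝ) + 1 + y = ij.2 + (y + 1) by ring]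
  linear_combination ((ij.1 : ℝ) + x) ^ ((ij.1 : ℤ) + -1) *
    ((ij.2 : ℝ) + (y + 1)) ^ ((ij.2 : ℤ) + 0) * hchoose

theorem neg_one_zero (hx : 0 < x) (hy : 0 < y) :
    abelSum₂ n x y (-1) 0 = (x + y + n) ^ n / x := by
  induction n generalizing x y with
  | zero => simp [abelSum₂]
  | succ n ih =>
    have hsum := neg_one_zero_add_zero_neg_one (n := n + 1) hx hy
    push_cast at hsum ⊢
    set T := x + y + (n + 1)
    set B := abelSum₂ (n + 1) x y (-1) (-1)
    have hD : abelSum₂ (n + 1) x y (-1) 0 = y * B + (n + 1) * (T ^ n / x) := by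
      rw [succ_neg_one_zero hy, ih hx (by positivity), show x + (y + 1) + n = T by ring]
    have hD' : abelSum₂ (n + 1) y x (-1) 0 = x * B + (n + 1) * (T ^ n / y) := by
      rw [succ_neg_one_zero hx, comm (x := y), ih hy (by positivity),
        show y + (x + 1) + n = T by ring]
    rw [comm 0, hD, hD'] at hsum
    field_simp at hsum
    have hB : B = T ^ n * (x + y) / (x * y) := by
      refine eq_div_of_mul_eq (by positivity) (mul_left_cancel₀ (b := B * (x * y))
        (show (n : ℝ) + 1 ≠ 0 by positivity) ?_)
      linear_combination -hsum
    rw [hD, hB]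
    field_simp
    ring

theorem neg_one_neg_one (hx : 0 < x) (hy : 0 < y) :
    abelSum₂ n x y (-1) (-1) = (x + y) * (x + y + n) ^ ((n : ℤ) - 1) / (x * y) := by
  have hsum := neg_one_zero_add_zero_neg_one (n := n) hx hy
  rw [comm 0, neg_one_zero hx hy, neg_one_zero hy hx, show y + x + n = x + y + n by ring] at hsum
  have hT : x + y + n ≠ 0 := by positivity
  rw [zpow_sub_one₀ hT, zpow_natCast, eq_div_iff (by positivity)]
  apply mul_left_cancel₀ hT
  field_simp at hsum ⊢
  linear_combination -hsum

end abelSum₂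

/-- The Abel polynomial; the integer power makes `abelPoly 0 x = 1` only for `x ≠ 0`. -/
noncomputable def abelPoly (n : ℕ) (x : ℝ) : ℝ := x * (n + x) ^ ((n : ℤ) - 1)

theorem abelPoly_add {x y : ℝ} (hx : 0 < x) (hy : 0 < y) (n : ℕ) :
    abelPoly n (x + y) =
      ∑ ij ∈ antidiagonal n, (n.choose ij.1 : ℝ) * (abelPoly ij.1 x * abelPoly ij.2 y) := by
  have hterms : ∑ ij ∈ antidiagonal n, (n.choose ij.1 : ℝ) * (abelPoly ij.1 x * abelPoly ij.2 y) =
      x * y * abelSum₂ n x y (-1) (-1) := by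
    rw [abelSum₂, mul_sum]
    refine sum_congr rfl fun ij _ => ?_
    simp only [abelPoly, sub_eq_add_neg]
    ring
  rw [hterms, abelSum₂.neg_one_neg_one hx hy, abelPoly]
  field_simp
  ring_nf

theorem abelPoly_sum {m : ℕ} (hm : 1 ≤ m) (n : ℕ) (x : Fin m → ℝ) (hx : ∀ i, 0 < x i) :
    abelPoly n (∑ j, x j) =
      ∑ s ∈ Nat.antidiagonalTuple m n, (Nat.multinomial univ s : ℝ) * ∏ j, abelPoly (s j) (x j) := by
  induction m, hm using Nat.le_induction generalizing n with
  | base => simp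
  | succ m hm ih =>
    have htail : 0 < ∑ j, x (Fin.succ j) :=
      sum_pos (fun j _ => hx j.succ) ⟨⟨0, hm⟩, mem_univ _⟩
    rw [Nat.sum_antidiagonalTuple_succ, Fin.sum_univ_succ, abelPoly_add (hx 0) htail]
    refine sum_congr rfl fun p hp => ?_
    rw [ih p.2 _ (fun j => hx j.succ), mul_sum, mul_sum]
    refine sum_congr rfl fun t ht => ?_
    rw [Nat.multinomial_univ_fin_cons, Nat.mem_antidiagonalTuple.mp ht, mem_antidiagonal.mp hp,
      Fin.prod_univ_succ]
    simp only [Fin.cons_zero, Fin.cons_succ]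
    push_cast
    ring

/-- Abel's multinomial theorem, all `p_i = -1`:
`A_n(x_1,…,x_m; -1,…,-1) = (x_1+⋯+x_m)(x_1+⋯+x_m+n)^(n-1) / (x_1 x_2 ⋯ x_m)`. -/
theorem abelSum_neg_one (m n : ℕ) (hm : 1 ≤ m) (x : Fin m → ℝ) (hx : ∀ i, 0 < x i) :
    abelSum m n x (fun _ => -1) =
      (∑ i, x i) * ((∑ i, x i) + n) ^ ((n : ℤ) - 1) / ∏ i, x i := by
  have hfactor (k : ℕ) (j : Fin m) :
      ((k : ℝ) + x j) ^ ((k : ℤ) + -1) = (x j)⁻¹ * abelPoly k (x j) := by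
    rw [abelPoly, inv_mul_cancel_left₀ (hx j).ne', sub_eq_add_neg]
  simp only [abelSum, hfactor, prod_mul_distrib, prod_inv_distrib]
  rw [div_eq_inv_mul, ← add_comm (n : ℝ), ← abelPoly, abelPoly_sum hm n x hx, mul_sum]
  exact sum_congr rfl fun _ _ => by ring
end

section
/- For all n ≥ 1 and 1 ≤ k ≤ n−1, the number of parking completions of the initial block (1, 2, …, k) in [n] is |PC_n((1,…,k))| = (k+1)(n+1)^(n−k−1). -/
/-!
Parking fails exactly when some tail `{s + 1, …, n}` is asked to hold more cars, counting the
spots already taken there, than it has spots. For `n - k` cars this bound is automatic on the tails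
that meet the block `{1, …, k}`, so the completions of the block are exactly the sequences that park
in the empty lot. These are counted by Pollak's circle argument: on `ZMod (n + 1)`, where a car
running past `n` wraps around to `0`, a sequence parks iff spot `0` stays empty. Rotating all
preferences rotates the final configuration, so each of the `n + 1` spots is left empty by equally
many of the `(n + 1) ^ (n - k)` sequences, while every sequence leaves exactly `k + 1` spots empty;
hence `(n + 1) * |PC| = (k + 1) * (n + 1) ^ (n - k)`.
-/

open Finset

lemma card_filter_lt_le_of_subset_Icc {n : ℕ} {occ : Finset ℕ} (hocc : occ ⊆ Icc 1 n) (s : ℕ) :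
    #(occ.filter (s < ·)) ≤ n - s :=
  calc #(occ.filter (s < ·)) ≤ #(Ioc s n) := card_le_card fun x hx => by
        have := mem_Icc.1 (hocc (mem_filter.1 hx).1)
        simp only [mem_filter] at hx
        simp only [mem_Ioc]
        omega
    _ = n - s := Nat.card_Ioc s n

lemma card_filter_lt_add_le_of_Icc_subset {occ : Finset ℕ} {t s : ℕ} (hts : t ≤ s)
    (h : Icc (t + 1) s ⊆ occ) : #(occ.filter (s < ·)) + (s - t) ≤ #(occ.filter (t < ·)) := by
  have hdisj : Disjoint (occ.filter (s < ·)) (Icc (t + 1) s) :=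
    disjoint_left.2 fun x hx hx' => by simp only [mem_filter, mem_Icc] at hx hx'; omega
  calc #(occ.filter (s < ·)) + (s - t) = #(occ.filter (s < ·) ∪ Icc (t + 1) s) := by
        rw [card_union_of_disjoint hdisj, Nat.card_Icc]; omega
    _ ≤ #(occ.filter (t < ·)) := card_le_card <| union_subset
        (fun x hx => mem_filter.2 ⟨(mem_filter.1 hx).1, by have := (mem_filter.1 hx).2; omega⟩)
        (fun x hx => mem_filter.2 ⟨h hx, by simp only [mem_Icc] at hx; omega⟩)

def TailCondition (n : ℕ) (occ : Finset ℕ) (l : List ℕ) : Prop :=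
  ∀ s, l.countP (s < ·) + #(occ.filter (s < ·)) ≤ n - s

lemma tailCondition_nil {n : ℕ} {occ : Finset ℕ} (hocc : occ ⊆ Icc 1 n) : TailCondition n occ [] :=
  fun s => by simpa using card_filter_lt_le_of_subset_Icc hocc s

lemma countP_lt_cons (p s : ℕ) (rest : List ℕ) :
    (p :: rest).countP (s < ·) = rest.countP (s < ·) + if s < p then 1 else 0 := by
  simp [List.countP_cons]

lemma tailCondition_insert_iff {n p b : ℕ} {occ : Finset ℕ} {rest : List ℕ} (hp : 1 ≤ p)
    (hpb : p ≤ b) (hb : b ∉ occ) (hgap : ∀ x, p ≤ x → x < b → x ∈ occ) :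
    TailCondition n (insert b occ) rest ↔ TailCondition n occ (p :: rest) := by
  have hcard : ∀ s, #((insert b occ).filter (s < ·)) =
      #(occ.filter (s < ·)) + if s < b then 1 else 0 := fun s => by
    rw [filter_insert]
    split_ifs
    · exact card_insert_of_notMem fun hmem => hb (mem_filter.1 hmem).1
    · rfl
  refine ⟨fun h s => ?_, fun h s => ?_⟩
  · have := h s
    rw [hcard] at this
    rw [countP_lt_cons]
    split_ifs at * <;> omega
  · have := h s
    rw [countP_lt_cons] at this
    rw [hcard]
    by_cases hs : p ≤ s ∧ s < b
    · -- the spots `p, …, s` are taken, so the bound at `p - 1` is the binding one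
      have hp := h (p - 1)
      rw [countP_lt_cons, if_pos (by omega)] at hp
      have hocc := card_filter_lt_add_le_of_Icc_subset (occ := occ) (t := p - 1) (s := s)
        (by omega) fun x hx => by simp only [mem_Icc] at hx; exact hgap x (by omega) (by omega)
      have hmono : rest.countP (s < ·) ≤ rest.countP (p - 1 < ·) :=
        List.countP_mono_left fun x _ hx => by simp only [decide_eq_true_eq] at hx ⊢; omega
      split_ifs at * <;> omega
    · split_ifs at * <;> omega

lemma not_tailCondition_cons_of_Icc_subset {n p : ℕ} {occ : Finset ℕ} {rest : List ℕ}
    (hp : p ∈ Icc 1 n) (h : Icc p n ⊆ occ) : ¬TailCondition n occ (p :: rest) := by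
  obtain ⟨hp1, hpn⟩ := mem_Icc.1 hp
  intro htail
  have hbound := htail (p - 1)
  have hfull := card_filter_lt_add_le_of_Icc_subset (occ := occ) (t := p - 1) (s := n) (by omega)
    (by rwa [Nat.sub_add_cancel hp1])
  rw [countP_lt_cons, if_pos (by omega)] at hbound
  omega

lemma mem_of_le_of_lt_min'_Icc_sdiff {n p : ℕ} {occ : Finset ℕ} (h : (Icc p n \ occ).Nonempty)
    (x : ℕ) (hpx : p ≤ x) (hx : x < (Icc p n \ occ).min' h) : x ∈ occ := by
  by_contra hxocc
  have hxn : x ≤ n := (hx.trans_le (mem_Icc.1 (mem_sdiff.1 (min'_mem _ h)).1).2).le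
  exact absurd (min'_le _ x (mem_sdiff.2 ⟨mem_Icc.2 ⟨hpx, hxn⟩, hxocc⟩)) (not_le.2 hx)

lemma park_cons_of_nonempty {n p : ℕ} {occ : Finset ℕ} (rest : List ℕ)
    (h : (Icc p n \ occ).Nonempty) :
    park n occ (p :: rest) = park n (insert ((Icc p n \ occ).min' h) occ) rest := by
  rw [park, dif_pos h]

lemma park_cons_of_Icc_subset {n p : ℕ} {occ : Finset ℕ} (rest : List ℕ) (h : Icc p n ⊆ occ) :
    park n occ (p :: rest) = none := by
  rw [park, dif_neg (by rwa [not_nonempty_iff_eq_empty, sdiff_eq_empty_iff_subset])]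

theorem park_isSome_iff_tailCondition {n : ℕ} {occ : Finset ℕ} {l : List ℕ}
    (hocc : occ ⊆ Icc 1 n) (hl : ∀ p ∈ l, p ∈ Icc 1 n) :
    (park n occ l).isSome ↔ TailCondition n occ l := by
  induction l generalizing occ with
  | nil => simpa [park] using tailCondition_nil hocc
  | cons p rest ih =>
    have hp := hl p List.mem_cons_self
    have hrest : ∀ q ∈ rest, q ∈ Icc 1 n := fun q hq => hl q (List.mem_cons_of_mem p hq)
    by_cases hfree : (Icc p n \ occ).Nonempty
    · obtain ⟨hb, hbocc⟩ := mem_sdiff.1 (min'_mem _ hfree)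
      simp only [mem_Icc] at hp hb
      rw [park_cons_of_nonempty rest hfree,
        ih (insert_subset (mem_Icc.2 ⟨by omega, hb.2⟩) hocc) hrest]
      exact tailCondition_insert_iff hp.1 hb.1 hbocc (mem_of_le_of_lt_min'_Icc_sdiff hfree)
    · have hfull : Icc p n ⊆ occ := by
        rwa [not_nonempty_iff_eq_empty, sdiff_eq_empty_iff_subset] at hfree
      rw [park_cons_of_Icc_subset rest hfull]
      simpa using not_tailCondition_cons_of_Icc_subset hp hfull

theorem park_Icc_isSome_iff_park_empty {n k : ℕ} (hkn : k ≤ n) {l : List ℕ}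
    (hlen : l.length ≤ n - k) (hl : ∀ p ∈ l, p ∈ Icc 1 n) :
    (park n (Icc 1 k) l).isSome ↔ (park n ∅ l).isSome := by
  rw [park_isSome_iff_tailCondition (Icc_subset_Icc_right hkn) hl,
    park_isSome_iff_tailCondition (empty_subset _) hl]
  refine forall_congr' fun s => ?_
  have hblock : #((Icc 1 k).filter (s < ·)) = k - s := by
    rw [show (Icc 1 k).filter (s < ·) = Ioc s k by
      ext; simp only [mem_filter, mem_Icc, mem_Ioc]; omega, Nat.card_Ioc]
  have hle : l.countP (s < ·) ≤ l.length := List.countP_le_length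
  by_cases hks : k ≤ s <;> simp only [hblock, filter_empty, card_empty] <;> omega

section CircularParking

open scoped Classical in
noncomputable def circularSpot (N : ℕ) [NeZero N] (occ : Finset (ZMod N)) (p : ZMod N) : ZMod N :=
  if h : ∃ d : ℕ, p + d ∉ occ then p + Nat.find h else p

noncomputable def circularPark (N : ℕ) [NeZero N] :
    Finset (ZMod N) → List (ZMod N) → Finset (ZMod N)
  | occ, [] => occ
  | occ, p :: rest => circularPark N (insert (circularSpot N occ p) occ) rest

variable {N : ℕ} [NeZero N]

lemma exists_add_notMem_of_ne_univ {occ : Finset (ZMod N)} (h : occ ≠ univ) (p : ZMod N) :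
    ∃ d : ℕ, p + d ∉ occ := by
  obtain ⟨x, hx⟩ : ∃ x, x ∉ occ := by
    by_contra! hall
    exact h (eq_univ_iff_forall.2 hall)
  exact ⟨(x - p).val, by rwa [ZMod.natCast_zmod_val, add_sub_cancel]⟩

lemma circularSpot_notMem {occ : Finset (ZMod N)} (h : occ ≠ univ) (p : ZMod N) :
    circularSpot N occ p ∉ occ := by
  rw [circularSpot, dif_pos (exists_add_notMem_of_ne_univ h p)]
  exact Nat.find_spec (exists_add_notMem_of_ne_univ h p)

lemma circularSpot_eq_add {occ : Finset (ZMod N)} {p : ZMod N} {d : ℕ} (hd : p + d ∉ occ)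
    (hlt : ∀ e < d, p + e ∈ occ) : circularSpot N occ p = p + d := by
  rw [circularSpot, dif_pos ⟨d, hd⟩, (Nat.find_eq_iff _).2 ⟨hd, fun e he => not_not.2 (hlt e he)⟩]

lemma circularSpot_of_notMem {occ : Finset (ZMod N)} {p : ZMod N} (hp : p ∉ occ) :
    circularSpot N occ p = p := by
  simpa using circularSpot_eq_add (d := 0) (by simpa using hp) (by simp)

lemma subset_circularPark (occ : Finset (ZMod N)) (l : List (ZMod N)) :
    occ ⊆ circularPark N occ l := by
  induction l generalizing occ with
  | nil => exact subset_rfl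
  | cons p rest ih => exact (subset_insert _ occ).trans (ih _)

lemma card_circularPark {occ : Finset (ZMod N)} {l : List (ZMod N)} (h : #occ + l.length ≤ N) :
    #(circularPark N occ l) = #occ + l.length := by
  induction l generalizing occ with
  | nil => rfl
  | cons p rest ih =>
    have hne : occ ≠ univ := fun hocc => by
      rw [hocc, card_univ, ZMod.card] at h
      simp at h
    have hcard : #(insert (circularSpot N occ p) occ) = #occ + 1 :=
      card_insert_of_notMem (circularSpot_notMem hne p)
    rw [circularPark, ih (by rw [hcard]; simp only [List.length_cons] at h; omega), hcard,
      List.length_cons]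
    omega

lemma mem_circularPark_of_mem {p : ZMod N} {l : List (ZMod N)} (h : p ∈ l)
    (occ : Finset (ZMod N)) :
    p ∈ circularPark N occ l := by
  induction l generalizing occ with
  | nil => simp at h
  | cons q rest ih =>
    rw [circularPark]
    rcases List.mem_cons.1 h with rfl | h
    · by_cases hp : p ∈ occ
      · exact subset_circularPark _ _ (mem_insert_of_mem hp)
      · rw [circularSpot_of_notMem hp]
        exact subset_circularPark _ _ (mem_insert_self p occ)
    · exact ih h _

lemma circularSpot_map_addRight (occ : Finset (ZMod N)) (p r : ZMod N) :
    circularSpot N (occ.map (Equiv.addRight r).toEmbedding) (p + r) = circularSpot N occ p + r := by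
  have hshift : ∀ d : ℕ, p + r + d ∈ occ.map (Equiv.addRight r).toEmbedding ↔ p + d ∈ occ := by
    intro d
    simp only [mem_map_equiv, Equiv.addRight_symm_apply, add_right_comm p r, add_neg_cancel_right]
  by_cases h : ∃ d : ℕ, p + d ∉ occ
  · have hspot : circularSpot N occ p = p + Nat.find h := by rw [circularSpot, dif_pos h]
    rw [hspot, add_right_comm]
    exact circularSpot_eq_add (by rw [hshift]; exact Nat.find_spec h)
      fun e he => (hshift e).2 (not_not.1 (Nat.find_min h he))
  · have h' : ¬∃ d : ℕ, p + r + d ∉ occ.map (Equiv.addRight r).toEmbedding := by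
      simpa only [hshift] using h
    rw [circularSpot, circularSpot, dif_neg h, dif_neg h']

lemma circularPark_map_addRight (occ : Finset (ZMod N)) (l : List (ZMod N)) (r : ZMod N) :
    circularPark N (occ.map (Equiv.addRight r).toEmbedding) (l.map (· + r)) =
      (circularPark N occ l).map (Equiv.addRight r).toEmbedding := by
  induction l generalizing occ with
  | nil => rfl
  | cons p rest ih =>
    rw [List.map_cons, circularPark, circularPark, circularSpot_map_addRight, ← ih]
    congr 1
    rw [map_insert]
    rfl

end CircularParking

lemma natCast_mem_image_natCast_iff {n : ℕ} {occ : Finset ℕ} (hocc : occ ⊆ Icc 1 n) {x : ℕ}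
    (hx : x ≤ n + 1) : (x : ZMod (n + 1)) ∈ occ.image Nat.cast ↔ x ∈ occ := by
  refine ⟨fun hmem => ?_, mem_image_of_mem _⟩
  obtain ⟨a, ha, hax⟩ := mem_image.1 hmem
  have := mem_Icc.1 (hocc ha)
  rw [ZMod.natCast_eq_natCast_iff', Nat.mod_eq_of_lt (by omega : a < n + 1)] at hax
  rcases hx.lt_or_eq with hx | rfl
  · rw [Nat.mod_eq_of_lt hx] at hax
    exact hax ▸ ha
  · rw [Nat.mod_self] at hax
    omega

lemma circularSpot_image_natCast {n p b : ℕ} {occ : Finset ℕ} (hocc : occ ⊆ Icc 1 n)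
    (hpb : p ≤ b) (hb : b ≤ n + 1) (hbocc : b ∉ occ) (hgap : ∀ x, p ≤ x → x < b → x ∈ occ) :
    circularSpot (n + 1) (occ.image Nat.cast) p = b := by
  have hcast : ((p + (b - p) : ℕ) : ZMod (n + 1)) = b := by rw [Nat.add_sub_cancel' hpb]
  rw [← hcast, Nat.cast_add]
  refine circularSpot_eq_add ?_ fun e he => ?_
  · rwa [← Nat.cast_add, natCast_mem_image_natCast_iff hocc (by omega), Nat.add_sub_cancel' hpb]
  · rw [← Nat.cast_add, natCast_mem_image_natCast_iff hocc (by omega)]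
    exact hgap _ (by omega) (by omega)

theorem park_isSome_iff_zero_notMem_circularPark {n : ℕ} {occ : Finset ℕ} {l : List ℕ}
    (hocc : occ ⊆ Icc 1 n) (hl : ∀ p ∈ l, p ∈ Icc 1 n) :
    (park n occ l).isSome ↔
      (0 : ZMod (n + 1)) ∉ circularPark (n + 1) (occ.image Nat.cast) (l.map Nat.cast) := by
  induction l generalizing occ with
  | nil =>
    simp only [park, Option.isSome_some, List.map_nil, circularPark, true_iff]
    rw [← Nat.cast_zero, natCast_mem_image_natCast_iff hocc (by omega)]
    exact fun h => by simpa using hocc h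
  | cons p rest ih =>
    obtain ⟨hp1, hpn⟩ := mem_Icc.1 (hl p List.mem_cons_self)
    have hrest : ∀ q ∈ rest, q ∈ Icc 1 n := fun q hq => hl q (List.mem_cons_of_mem p hq)
    rw [List.map_cons, circularPark]
    by_cases hfree : (Icc p n \ occ).Nonempty
    · obtain ⟨hb, hbocc⟩ := mem_sdiff.1 (min'_mem _ hfree)
      obtain ⟨hpb, hbn⟩ := mem_Icc.1 hb
      rw [park_cons_of_nonempty rest hfree, circularSpot_image_natCast hocc hpb (by omega) hbocc
        (mem_of_le_of_lt_min'_Icc_sdiff hfree), ← image_insert]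
      exact ih (insert_subset (mem_Icc.2 ⟨by omega, hbn⟩) hocc) hrest
    · have hfull : Icc p n ⊆ occ := by
        rwa [not_nonempty_iff_eq_empty, sdiff_eq_empty_iff_subset] at hfree
      -- the car runs past spot `n` and wraps around to spot `n + 1 = 0`
      rw [park_cons_of_Icc_subset rest hfull, circularSpot_image_natCast hocc (b := n + 1)
        (by omega) le_rfl (fun h => by simpa using hocc h)
        (fun x hpx hx => hfull (mem_Icc.2 ⟨hpx, by omega⟩)), ZMod.natCast_self]
      simpa using subset_circularPark _ _ (mem_insert_self _ _)

section Pollak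

noncomputable def circularParkingFunctions (N m : ℕ) [NeZero N] : Finset (Fin m → ZMod N) :=
  univ.filter fun f => (0 : ZMod N) ∉ circularPark N ∅ (List.ofFn f)

variable {N m : ℕ} [NeZero N]

lemma card_filter_notMem_circularPark (t : ZMod N) :
    #(univ.filter fun f : Fin m → ZMod N => t ∉ circularPark N ∅ (List.ofFn f)) =
      #(circularParkingFunctions N m) := by
  refine (card_equiv (Equiv.addRight fun _ => t) fun f => ?_).symm
  have hrotate : List.ofFn (f + fun _ => t) = (List.ofFn f).map (· + t) := by
    rw [List.map_ofFn]; rfl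
  simp only [circularParkingFunctions, mem_filter, mem_univ, true_and, Equiv.coe_addRight, hrotate]
  have hshift : circularPark N ∅ ((List.ofFn f).map (· + t)) =
      (circularPark N ∅ (List.ofFn f)).map (Equiv.addRight t).toEmbedding := by
    simpa using circularPark_map_addRight ∅ (List.ofFn f) t
  rw [hshift, mem_map_equiv]
  simp

theorem card_circularParkingFunctions_mul (hm : m ≤ N) :
    N * #(circularParkingFunctions N m) = (N - m) * N ^ m := by
  have hfree : ∀ f : Fin m → ZMod N,
      #(univ.filter fun t => t ∉ circularPark N ∅ (List.ofFn f)) = N - m := by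
    intro f
    rw [filter_notMem_eq_sdiff, card_univ_sdiff, ZMod.card,
      card_circularPark (by simpa using hm), card_empty, List.length_ofFn, zero_add]
  calc N * #(circularParkingFunctions N m)
      = ∑ t : ZMod N,
          #(univ.filter fun f : Fin m → ZMod N => t ∉ circularPark N ∅ (List.ofFn f)) := by
        simp [card_filter_notMem_circularPark, ZMod.card]
    _ = ∑ f : Fin m → ZMod N, #(univ.filter fun t => t ∉ circularPark N ∅ (List.ofFn f)) :=
        (sum_card_bipartiteAbove_eq_sum_card_bipartiteBelow _).symm
    _ = (N - m) * N ^ m := by simp [hfree, ZMod.card, mul_comm]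

theorem card_circularParkingFunctions (hm : 1 ≤ m) (hmN : m ≤ N) :
    #(circularParkingFunctions N m) = (N - m) * N ^ (m - 1) := by
  refine Nat.eq_of_mul_eq_mul_left (NeZero.pos N) ?_
  rw [card_circularParkingFunctions_mul hmN, mul_left_comm, ← pow_succ', Nat.sub_add_cancel hm]

end Pollak

lemma card_filter_comp_natCast_succ {m n : ℕ} (P : (Fin m → ZMod (n + 1)) → Prop)
    [DecidablePred P] (hP : ∀ f, P f → ∀ i, f i ≠ 0) :
    #(univ.filter fun π : Fin m → Fin n => P fun i => (((π i : ℕ) + 1 : ℕ) : ZMod (n + 1))) =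
      #(univ.filter P) := by
  have hval : ∀ x : Fin n, (((x : ℕ) + 1 : ℕ) : ZMod (n + 1)).val = x + 1 := fun x =>
    ZMod.val_natCast_of_lt (Nat.succ_lt_succ x.isLt)
  have hpos : ∀ {x : ZMod (n + 1)}, x ≠ 0 → 1 ≤ x.val := fun hx =>
    Nat.one_le_iff_ne_zero.2 ((ZMod.val_ne_zero _).2 hx)
  refine card_nbij (fun π i => (((π i : ℕ) + 1 : ℕ) : ZMod (n + 1)))
    (fun π hπ => mem_filter.2 ⟨mem_univ _, (mem_filter.1 hπ).2⟩)
    (fun π _ π' _ h => funext fun i => Fin.ext ?_) fun f hf => ?_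
  · have := congrArg ZMod.val (congrFun h i)
    simp only [hval] at this
    omega
  · have hf := (mem_filter.1 hf).2
    have hpos' := fun i => hpos (hP f hf i)
    have hcast : (fun i => ((((f i).val - 1 + 1 : ℕ)) : ZMod (n + 1))) = f := funext fun i => by
      rw [Nat.sub_add_cancel (hpos' i), ZMod.natCast_zmod_val]
    refine ⟨fun i => ⟨(f i).val - 1, by have := (f i).val_lt; have := hpos' i; omega⟩,
      mem_filter.2 ⟨mem_univ _, ?_⟩, hcast⟩
    dsimp only
    rwa [hcast]

theorem card_parkingCompletions_initialBlock_general (n k : ℕ) (hk1 : 1 ≤ k)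
    (hk : k ≤ n - 1) :
    (PC n (fun j : Fin k => (j : ℕ) + 1)).card = (k + 1) * (n + 1) ^ (n - k - 1) := by
  have hblock : univ.image (fun j : Fin k => (j : ℕ) + 1) = Icc 1 k := by
    ext x
    simp only [mem_image, mem_univ, true_and, mem_Icc]
    exact ⟨fun ⟨j, hj⟩ => by omega, fun hx => ⟨⟨x - 1, by omega⟩, by simp only; omega⟩⟩
  have hPC : PC n (fun j : Fin k => (j : ℕ) + 1) = univ.filter fun π : Fin (n - k) → Fin n =>
      (0 : ZMod (n + 1)) ∉
        circularPark (n + 1) ∅ (List.ofFn fun i => (((π i : ℕ) + 1 : ℕ) : ZMod (n + 1))) := by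
    refine filter_congr fun π _ => ?_
    have hl : ∀ p ∈ List.ofFn (fun i => (π i : ℕ) + 1), p ∈ Icc 1 n := by
      simp only [List.mem_ofFn, mem_Icc]
      rintro p ⟨i, rfl⟩
      omega
    rw [hblock, park_Icc_isSome_iff_park_empty (by omega) (List.length_ofFn).le hl,
      park_isSome_iff_zero_notMem_circularPark (empty_subset _) hl, image_empty, List.map_ofFn]
    rfl
  rw [hPC, card_filter_comp_natCast_succ
      (fun f => (0 : ZMod (n + 1)) ∉ circularPark (n + 1) ∅ (List.ofFn f))
      fun f hf i h0 => hf (h0 ▸ mem_circularPark_of_mem (List.mem_ofFn.2 ⟨i, rfl⟩) ∅),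
    ← circularParkingFunctions, card_circularParkingFunctions (by omega) (by omega)]
  congr 1
  omega

/-- The number of parking completions of the initial block `(1,…,k)` in `[n]`, for
`1 ≤ k ≤ n-1`, is `(k+1)(n+1)^(n-k-1)`. -/
theorem card_parkingCompletions_initialBlock (n k : ℕ) (hn : 1 ≤ n) (hk1 : 1 ≤ k)
    (hk : k ≤ n - 1) :
    (PC n (fun j : Fin k => (j : ℕ) + 1)).card = (k + 1) * (n + 1) ^ (n - k - 1) :=
  card_parkingCompletions_initialBlock_general n k hk1 hk
end

section
/- For every n ≥ 1, every 1 ≤ k ≤ n, and every choice of indices 1 ≤ i_1 < i_2 < … < i_k ≤ n, the number of parking completions satisfies |PC_n((i_1,…,i_k))| ≤ |PC_n((1,…,k))|. -/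
open Finset

/-!
Say that `occ'` dominates `occ` when every final segment `[q, n]` has at least as many free
spots under `occ'` as under `occ`. Domination is preserved when a car with the same preference
parks in both situations, so every preference list that parks all its cars starting from `occ`
also does so from `occ'`. Since `j ≤ i_j`, the initial block `{1, …, k}` dominates
`{i_1, …, i_k}`, whence `PC_n(i_1, …, i_k) ⊆ PC_n(1, …, k)`.
-/

open Function

def FreeSpotsLE (n : ℕ) (occ occ' : Finset ℕ) : Prop :=
  ∀ q, #(Icc q n \ occ) ≤ #(Icc q n \ occ')

lemma card_Icc_sdiff_insert_add {n m : ℕ} {occ : Finset ℕ} (hmn : m ≤ n) (hm : m ∉ occ)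
    (q : ℕ) : #(Icc q n \ insert m occ) + (if q ≤ m then 1 else 0) = #(Icc q n \ occ) := by
  rw [sdiff_insert]
  split_ifs with hq
  · exact card_erase_add_one (by simp [hq, hmn, hm])
  · rw [erase_eq_of_notMem (by simp [hq]), add_zero]

lemma card_Icc_sdiff_lt_of_mem {n p q m : ℕ} {occ : Finset ℕ} (hm : m ∈ Icc p n \ occ)
    (hmq : m < q) (hpq : p ≤ q) : #(Icc q n \ occ) < #(Icc p n \ occ) :=
  card_lt_card <| ssubset_of_subset_not_subset
    (sdiff_subset_sdiff (Icc_subset_Icc_left hpq) le_rfl)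
    fun h => by
      have := h hm
      simp only [mem_sdiff, mem_Icc] at this
      omega

lemma card_Icc_sdiff_eq_of_forall_le {n p q : ℕ} {occ : Finset ℕ} (hpq : p ≤ q)
    (hq : ∀ x ∈ Icc p n \ occ, q ≤ x) : #(Icc q n \ occ) = #(Icc p n \ occ) := by
  congr 1
  ext x
  simp only [mem_sdiff, mem_Icc]
  constructor
  · rintro ⟨⟨hqx, hxn⟩, hx⟩
    exact ⟨⟨hpq.trans hqx, hxn⟩, hx⟩
  · rintro ⟨⟨hpx, hxn⟩, hx⟩
    exact ⟨⟨hq x (by simp [hpx, hxn, hx]), hxn⟩, hx⟩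

namespace FreeSpotsLE

variable {n : ℕ} {occ occ' : Finset ℕ}

/-- The only nontrivial case is `m < q ≤ m'`: then `occ'` has no free spot in `[p, q)`, while
`occ` has the free spot `m` there, so `occ` had strictly fewer free spots in `[q, n]`. -/
lemma insert_min' (hdom : FreeSpotsLE n occ occ') {p : ℕ} (h : (Icc p n \ occ).Nonempty)
    (h' : (Icc p n \ occ').Nonempty) :
    FreeSpotsLE n (insert ((Icc p n \ occ).min' h) occ)
      (insert ((Icc p n \ occ').min' h') occ') := by
  intro q
  set m := (Icc p n \ occ).min' h
  set m' := (Icc p n \ occ').min' h'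
  have hm : m ∈ Icc p n \ occ := min'_mem _ _
  obtain ⟨hmIcc, hmocc⟩ := mem_sdiff.1 hm
  have hm' : m' ∈ Icc p n \ occ' := min'_mem _ _
  obtain ⟨hm'Icc, hm'occ⟩ := mem_sdiff.1 hm'
  have hstrict (hmq : m < q) (hqm' : q ≤ m') : #(Icc q n \ occ) < #(Icc q n \ occ') := by
    have hpq : p ≤ q := (mem_Icc.1 hmIcc).1.trans hmq.le
    calc #(Icc q n \ occ) < #(Icc p n \ occ) := card_Icc_sdiff_lt_of_mem hm hmq hpq
      _ ≤ #(Icc p n \ occ') := hdom p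
      _ = #(Icc q n \ occ') :=
        (card_Icc_sdiff_eq_of_forall_le hpq fun x hx => hqm'.trans (min'_le _ x hx)).symm
  have e := card_Icc_sdiff_insert_add (mem_Icc.1 hmIcc).2 hmocc q
  have e' := card_Icc_sdiff_insert_add (mem_Icc.1 hm'Icc).2 hm'occ q
  have hq := hdom q
  by_cases hqm : q ≤ m <;> by_cases hqm' : q ≤ m' <;>
    simp only [hqm, hqm', if_true, if_false] at e e'
  · omega
  · omega
  · have := hstrict (not_le.1 hqm) hqm'
    omega
  · omega

lemma park_isSome (hdom : FreeSpotsLE n occ occ') {l : List ℕ}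
    (hpark : (park n occ l).isSome) : (park n occ' l).isSome := by
  induction l generalizing occ occ' with
  | nil => simp [park]
  | cons p rest ih =>
    rw [park] at hpark ⊢
    by_cases h : (Icc p n \ occ).Nonempty
    · have h' : (Icc p n \ occ').Nonempty := card_pos.1 ((card_pos.2 h).trans_le (hdom p))
      simp only [h, h', dif_pos] at hpark ⊢
      exact ih (hdom.insert_min' h h') hpark
    · simp [h] at hpark

end FreeSpotsLE

lemma card_Icc_sdiff_image {n k : ℕ} {v : Fin k → ℕ} (hv : Injective v)
    (hvn : ∀ i, v i ≤ n) (q : ℕ) :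
    #(Icc q n \ univ.image v) = #(Icc q n) - #{i | q ≤ v i} := by
  rw [card_sdiff, ← card_image_of_injective _ hv]
  congr 2
  ext x
  simp only [mem_inter, mem_image, mem_univ, true_and, mem_Icc, mem_filter]
  constructor
  · rintro ⟨⟨i, rfl⟩, hq, -⟩
    exact ⟨i, hq, rfl⟩
  · rintro ⟨i, hq, rfl⟩
    exact ⟨⟨i, rfl⟩, hq, hvn i⟩

lemma freeSpotsLE_image_of_le {n k : ℕ} {v w : Fin k → ℕ} (hv : Injective v)
    (hw : Injective w) (hvn : ∀ i, v i ≤ n) (hwn : ∀ i, w i ≤ n)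
    (hwv : ∀ i, w i ≤ v i) :
    FreeSpotsLE n (univ.image v) (univ.image w) := by
  intro q
  rw [card_Icc_sdiff_image hv hvn, card_Icc_sdiff_image hw hwn]
  refine Nat.sub_le_sub_left (card_le_card fun i hi => ?_) _
  simp only [mem_filter, mem_univ, true_and] at hi ⊢
  exact hi.trans (hwv i)

lemma StrictMono.val_add_one_le {k : ℕ} {v : Fin k → ℕ} (hv : StrictMono v)
    (hv1 : ∀ i, 1 ≤ v i) (i : Fin k) : (i : ℕ) + 1 ≤ v i := by
  obtain ⟨i, hi⟩ := i
  induction i with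
  | zero => exact hv1 _
  | succ i ih =>
    have hlt : v ⟨i, by omega⟩ < v ⟨i + 1, hi⟩ := hv (Fin.mk_lt_mk.2 (Nat.lt_succ_self i))
    have ih' : i + 1 ≤ v ⟨i, _⟩ := ih (by omega)
    show i + 1 + 1 ≤ _
    omega

theorem card_parkingCompletions_le_initialBlock_general (n k : ℕ) (v : Fin k → ℕ) (hv : StrictMono v)
    (hv1 : ∀ i, 1 ≤ v i) (hvn : ∀ i, v i ≤ n) :
    (PC n v).card ≤ (PC n (fun j : Fin k => (j : ℕ) + 1)).card := by
  have hblock : ∀ j : Fin k, (j : ℕ) + 1 ≤ v j := hv.val_add_one_le hv1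
  have hdom : FreeSpotsLE n (univ.image v) (univ.image fun j : Fin k => (j : ℕ) + 1) :=
    freeSpotsLE_image_of_le hv.injective (fun _ _ h => Fin.ext (by simpa using h)) hvn
      (fun j => (hblock j).trans (hvn j)) hblock
  refine card_le_card fun π hπ => ?_
  simp only [PC, mem_filter, mem_univ, true_and] at hπ ⊢
  exact hdom.park_isSome hπ

/-- For any occupied spots `1 ≤ i_1 < ⋯ < i_k ≤ n`, the number of parking completions is at
most that of the initial block `(1,…,k)`. -/
theorem card_parkingCompletions_le_initialBlock (n k : ℕ) (hn : 1 ≤ n) (hk1 : 1 ≤ k)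
    (hkn : k ≤ n) (v : Fin k → ℕ) (hv : StrictMono v) (hv1 : ∀ i, 1 ≤ v i)
    (hvn : ∀ i, v i ≤ n) :
    (PC n v).card ≤ (PC n (fun j : Fin k => (j : ℕ) + 1)).card :=
  card_parkingCompletions_le_initialBlock_general n k v hv hv1 hvn
end
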